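/- arXiv:2211.04792 — 3 statements merged into one kernel-verified Lean document; each statement's English description precedes it below -/
import Mathlib

section
/- Suppose L[λ] is nonresonant both for the Periodic and the Dirichlet boundary conditions and that G_P[λ](1,0) ≠ 0. Then for all (t,s) ∈ I × I: G_D[λ](t,s) = G_P[λ](t,s) − (G_P[λ](t,0) / G_P[λ](1,0)) · G_P[λ](1,s). -/
open MeasureTheory Set

noncomputable section

/-- The interval `I = [0,1]`. -/
def unitI : Set ℝ := Set.Icc 0 1

/-- `u ∈ W^{2,1}(I)` with first derivative `u'`, solving
`u''(t) + (a(t)+λ)u(t) = σ(t)` a.e. on `I`.  The function `u` is `C¹` on `I`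
with derivative `u'`, and `u'` is absolutely continuous: it is the integral of
an integrable function `u''`, which satisfies the ODE a.e. on `I`. -/
def IsW21Solution (a : ℝ → ℝ) (lam : ℝ) (σ : ℝ → ℝ) (u u' : ℝ → ℝ) : Prop :=
  (∀ t ∈ unitI, HasDerivWithinAt u (u' t) unitI t) ∧
  ∃ u'' : ℝ → ℝ, IntervalIntegrable u'' volume 0 1 ∧
    (∀ t ∈ unitI, u' t = u' 0 + ∫ s in (0:ℝ)..t, u'' s) ∧
    (∀ᵐ t ∂(volume.restrict unitI), u'' t + (a t + lam) * u t = σ t)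

/-- Dirichlet boundary conditions `u(0) = u(1) = 0`. -/
def DirichletBC (u _u' : ℝ → ℝ) : Prop := u 0 = 0 ∧ u 1 = 0

/-- Neumann boundary conditions `u'(0) = u'(1) = 0`. -/
def NeumannBC (_u u' : ℝ → ℝ) : Prop := u' 0 = 0 ∧ u' 1 = 0

/-- Mixed 1 boundary conditions `u'(0) = u(1) = 0`. -/
def Mixed1BC (u u' : ℝ → ℝ) : Prop := u' 0 = 0 ∧ u 1 = 0

/-- Mixed 2 boundary conditions `u(0) = u'(1) = 0`. -/
def Mixed2BC (u u' : ℝ → ℝ) : Prop := u 0 = 0 ∧ u' 1 = 0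

/-- Periodic boundary conditions `u(0) = u(1)`, `u'(0) = u'(1)`. -/
def PeriodicBC (u u' : ℝ → ℝ) : Prop := u 0 = u 1 ∧ u' 0 = u' 1

/-- `L[λ]` is nonresonant for the boundary conditions `BC`: the only solution of the
homogeneous problem satisfying `BC` is the trivial one. -/
def Nonresonant (a : ℝ → ℝ) (lam : ℝ) (BC : (ℝ → ℝ) → (ℝ → ℝ) → Prop) : Prop :=
  ∀ u u' : ℝ → ℝ, IsW21Solution a lam (fun _ => 0) u u' → BC u u' →
    ∀ t ∈ unitI, u t = 0

/-- `G` is the Green's function of `L[λ]` with boundary conditions `BC`: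
`G` is continuous on `I × I` and for every integrable `σ`, the function
`u(t) = ∫₀¹ G(t,s) σ(s) ds` solves `L[λ]u = σ` a.e. on `I` and satisfies `BC`. -/
def IsGreenFunction (a : ℝ → ℝ) (lam : ℝ) (BC : (ℝ → ℝ) → (ℝ → ℝ) → Prop)
    (G : ℝ → ℝ → ℝ) : Prop :=
  ContinuousOn (fun p : ℝ × ℝ => G p.1 p.2) (unitI ×ˢ unitI) ∧
  ∀ σ : ℝ → ℝ, IntervalIntegrable σ volume 0 1 →
    ∃ u' : ℝ → ℝ,
      IsW21Solution a lam σ (fun t => ∫ s in (0:ℝ)..1, G t s * σ s) u' ∧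
      BC (fun t => ∫ s in (0:ℝ)..1, G t s * σ s) u'

/-- `λ` lies below the first eigenvalue of the problem with boundary conditions `BC`:
`L[μ]` is nonresonant for `BC` for every `μ ≤ λ`. -/
def BelowFirstEigenvalue (a : ℝ → ℝ) (lam : ℝ)
    (BC : (ℝ → ℝ) → (ℝ → ℝ) → Prop) : Prop :=
  ∀ μ : ℝ, μ ≤ lam → Nonresonant a μ BC

lemma zero_mem_unitI : (0:ℝ) ∈ unitI := ⟨le_refl 0, zero_le_one⟩

lemma one_mem_unitI : (1:ℝ) ∈ unitI := ⟨zero_le_one, le_refl 1⟩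

lemma vanish {f : ℝ → ℝ} (hf : ContinuousOn f unitI)
    (h : ∀ σ : ℝ → ℝ, IntervalIntegrable σ volume 0 1 →
      ∫ s in Ioc (0:ℝ) 1, f s * σ s = 0) :
    ∀ x ∈ unitI, f x = 0 := by
  have huIcc : uIcc (0:ℝ) 1 = unitI := uIcc_of_le zero_le_one
  have hfI : IntervalIntegrable f volume 0 1 :=
    ContinuousOn.intervalIntegrable (by rwa [huIcc])
  have h0 := h f hfI
  have hnn : 0 ≤ᵐ[volume.restrict (Ioc (0:ℝ) 1)] fun s => f s * f s :=
    Filter.Eventually.of_forall fun s => mul_self_nonneg _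
  have hint : IntegrableOn (fun s => f s * f s) (Ioc (0:ℝ) 1) volume :=
    (hfI.continuousOn_mul (by rwa [huIcc])).1
  have hae : (fun s => f s * f s) =ᵐ[volume.restrict (Ioc (0:ℝ) 1)] 0 :=
    (setIntegral_eq_zero_iff_of_nonneg_ae hnn hint).mp h0
  have hnull : volume.restrict (Ioc (0:ℝ) 1) {s | ¬ f s * f s = 0} = 0 := ae_iff.mp hae
  intro x hx
  by_contra hfx
  have hcw : ContinuousWithinAt f unitI x := hf x hx
  rw [Metric.continuousWithinAt_iff] at hcw
  obtain ⟨δ, hδ, hball⟩ := hcw (|f x|) (abs_pos.mpr hfx)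
  set lo := max 0 (x - δ) with hlo
  set hi := min 1 (x + δ) with hhi
  have hlohi : lo < hi := by
    rcases hx with ⟨hx0, hx1⟩
    apply max_lt <;> apply lt_min <;> linarith
  have hsub : Ioo lo hi ⊆ {s | f s * f s ≠ 0} := by
    intro y hy
    have hy0 : y ∈ unitI := ⟨le_of_lt (lt_of_le_of_lt (le_max_left _ _) hy.1),
      le_of_lt (lt_of_lt_of_le hy.2 (min_le_left _ _))⟩
    have hyd : dist y x < δ := by
      rw [Real.dist_eq, abs_lt]
      constructor
      · have := lt_of_le_of_lt (le_max_right _ _) hy.1; linarith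
      · have := lt_of_lt_of_le hy.2 (min_le_right _ _); linarith
    have := hball hy0 hyd
    rw [Real.dist_eq] at this
    have hfy : f y ≠ 0 := by
      intro h'; rw [h', zero_sub, abs_neg] at this; exact absurd this (lt_irrefl _)
    exact mul_ne_zero hfy hfy
  have hIoosub : Ioo lo hi ⊆ Ioc (0:ℝ) 1 := fun y hy =>
    ⟨lt_of_le_of_lt (le_max_left _ _) hy.1, le_of_lt (lt_of_lt_of_le hy.2 (min_le_left _ _))⟩
  have : volume.restrict (Ioc (0:ℝ) 1) (Ioo lo hi) = 0 :=
    measure_mono_null hsub hnull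
  rw [Measure.restrict_apply measurableSet_Ioo, inter_eq_self_of_subset_left hIoosub] at this
  rw [Real.volume_Ioo] at this
  have := ENNReal.ofReal_eq_zero.mp this
  linarith

lemma IsW21Solution.continuousOn {a : ℝ → ℝ} {lam : ℝ} {σ u u' : ℝ → ℝ}
    (h : IsW21Solution a lam σ u u') : ContinuousOn u unitI :=
  fun t ht => (h.1 t ht).continuousWithinAt

lemma IsW21Solution.congr_sigma {a : ℝ → ℝ} {lam : ℝ} {σ1 σ2 u u' : ℝ → ℝ}
    (h : IsW21Solution a lam σ1 u u') (hs : ∀ t, σ1 t = σ2 t) :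
    IsW21Solution a lam σ2 u u' := by
  obtain ⟨hd, u'', hi, hp, he⟩ := h
  exact ⟨hd, u'', hi, hp, he.mono fun t ht => by rw [← hs t]; exact ht⟩

lemma IsW21Solution.combo {a : ℝ → ℝ} {lam : ℝ} {σ1 σ2 u1 u1' u2 u2' : ℝ → ℝ} (c1 c2 : ℝ)
    (h1 : IsW21Solution a lam σ1 u1 u1') (h2 : IsW21Solution a lam σ2 u2 u2') :
    IsW21Solution a lam (fun t => c1 * σ1 t + c2 * σ2 t)
      (fun t => c1 * u1 t + c2 * u2 t) (fun t => c1 * u1' t + c2 * u2' t) := by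
  obtain ⟨hd1, u1'', hi1, hp1, he1⟩ := h1
  obtain ⟨hd2, u2'', hi2, hp2, he2⟩ := h2
  refine ⟨fun t ht => ((hd1 t ht).const_mul c1).add ((hd2 t ht).const_mul c2),
    fun t => c1 * u1'' t + c2 * u2'' t,
    (hi1.const_mul c1).add (hi2.const_mul c2), fun t ht => ?_, ?_⟩
  · have hsub : uIcc (0:ℝ) t ⊆ uIcc (0:ℝ) 1 := by
      rw [uIcc_of_le ht.1, uIcc_of_le zero_le_one]; exact Icc_subset_Icc le_rfl ht.2
    rw [intervalIntegral.integral_add ((hi1.mono_set hsub).const_mul c1)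
      ((hi2.mono_set hsub).const_mul c2),
      intervalIntegral.integral_const_mul, intervalIntegral.integral_const_mul]
    simp only [hp1 t ht, hp2 t ht]
    ring
  · filter_upwards [he1, he2] with t ht1 ht2
    linear_combination c1 * ht1 + c2 * ht2

lemma slice_cont_right {G : ℝ → ℝ → ℝ}
    (hG : ContinuousOn (fun p : ℝ × ℝ => G p.1 p.2) (unitI ×ˢ unitI)) {t : ℝ} (ht : t ∈ unitI) :
    ContinuousOn (fun s => G t s) unitI := by
  have h : ContinuousOn (fun s : ℝ => ((t, s) : ℝ × ℝ)) unitI :=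
    (continuous_const.prodMk continuous_id).continuousOn
  exact hG.comp h (fun s hs => ⟨ht, hs⟩)

lemma slice_cont_left {G : ℝ → ℝ → ℝ}
    (hG : ContinuousOn (fun p : ℝ × ℝ => G p.1 p.2) (unitI ×ˢ unitI)) {s : ℝ} (hs : s ∈ unitI) :
    ContinuousOn (fun t => G t s) unitI := by
  have h : ContinuousOn (fun t : ℝ => ((t, s) : ℝ × ℝ)) unitI :=
    (continuous_id.prodMk continuous_const).continuousOn
  exact hG.comp h (fun t ht => ⟨ht, hs⟩)

lemma deriv_continuousOn {u' u'' : ℝ → ℝ} (hi : IntervalIntegrable u'' volume 0 1)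
    (hp : ∀ t ∈ unitI, u' t = u' 0 + ∫ s in (0:ℝ)..t, u'' s) :
    ContinuousOn u' unitI := by
  have hIcc : IntegrableOn u'' (uIcc (0:ℝ) 1) volume := by
    rw [uIcc_of_le zero_le_one]
    exact (intervalIntegrable_iff_integrableOn_Icc_of_le zero_le_one).mp hi
  have hprim : ContinuousOn (fun x => ∫ s in (0:ℝ)..x, u'' s) (uIcc (0:ℝ) 1) :=
    intervalIntegral.continuousOn_primitive_interval hIcc
  rw [uIcc_of_le zero_le_one] at hprim
  exact (continuousOn_const.add hprim).congr hp

lemma ftc_tail {u u' : ℝ → ℝ} (hd : ∀ t ∈ unitI, HasDerivWithinAt u (u' t) unitI t)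
    (hc : ContinuousOn u' unitI) {s : ℝ} (hs : s ∈ unitI) :
    ∫ t in Ioc s 1, u' t = u 1 - u s := by
  have h1 : ContinuousOn u (Icc s 1) :=
    ContinuousOn.mono (s := unitI) (fun t ht => (hd t ht).continuousWithinAt) (Icc_subset_Icc hs.1 le_rfl)
  have h2 : ∀ x ∈ Ioo s 1, HasDerivWithinAt u (u' x) (Ioi x) x := by
    intro x hx
    have hxI : x ∈ unitI := ⟨le_trans hs.1 (le_of_lt hx.1), le_of_lt hx.2⟩
    have : HasDerivAt u (u' x) x :=
      (hd x hxI).hasDerivAt (Icc_mem_nhds (lt_of_le_of_lt hs.1 hx.1) hx.2)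
    exact this.hasDerivWithinAt
  have h3 : IntervalIntegrable u' volume s 1 := by
    apply ContinuousOn.intervalIntegrable
    rw [uIcc_of_le hs.2]
    exact hc.mono (Icc_subset_Icc hs.1 le_rfl)
  have := intervalIntegral.integral_eq_sub_of_hasDeriv_right_of_le hs.2 h1 h2 h3
  rw [intervalIntegral.integral_of_le hs.2] at this
  exact this

lemma integrable_mul_of_bdd {g f : ℝ → ℝ} (hg : IntegrableOn g (Ioc (0:ℝ) 1) volume)
    (hf : ContinuousOn f unitI) : IntegrableOn (fun s => g s * f s) (Ioc (0:ℝ) 1) volume := by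
  obtain ⟨C, hC⟩ := isCompact_Icc.exists_bound_of_continuousOn hf
  have hmeas : AEStronglyMeasurable (fun s => g s * f s) (volume.restrict (Ioc (0:ℝ) 1)) :=
    hg.aestronglyMeasurable.mul
      ((hf.mono Ioc_subset_Icc_self).aestronglyMeasurable measurableSet_Ioc)
  refine Integrable.mono' (hg.norm.const_mul C) hmeas ?_
  filter_upwards [ae_restrict_mem measurableSet_Ioc] with s hsA
  have hsI : s ∈ unitI := Ioc_subset_Icc_self hsA
  calc ‖g s * f s‖ = ‖f s‖ * ‖g s‖ := by rw [norm_mul, mul_comm]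
    _ ≤ C * ‖g s‖ := by
        apply mul_le_mul_of_nonneg_right (hC s hsI) (norm_nonneg _)

lemma claimA {u' u'' w' w_ : ℝ → ℝ}
    (hu''i : IntervalIntegrable u'' volume 0 1)
    (hup : ∀ t ∈ unitI, u' t = u' 0 + ∫ s in (0:ℝ)..t, u'' s)
    (hu'c : ContinuousOn u' unitI)
    (hwd : ∀ t ∈ unitI, HasDerivWithinAt w_ (w' t) unitI t)
    (hw'c : ContinuousOn w' unitI)
    (hw0 : w_ 0 = 0) (hw1 : w_ 1 = 0) :
    ∫ s in Ioc (0:ℝ) 1, u'' s * w_ s = - ∫ t in Ioc (0:ℝ) 1, u' t * w' t := by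
  have hu''A : IntegrableOn u'' (Ioc (0:ℝ) 1) volume := hu''i.1
  have hw'Icc : ContinuousOn w' (Icc (0:ℝ) 1) := hw'c
  have hwint : IntegrableOn w' (Ioc (0:ℝ) 1) volume :=
    hw'Icc.integrableOn_Icc.mono_set Ioc_subset_Icc_self
  have hFTCw : ∀ s ∈ unitI, ∫ t in Ioc s 1, w' t = - w_ s := by
    intro s hs
    rw [ftc_tail hwd hw'c hs, hw1]; ring
  set Φ : ℝ × ℝ → ℝ := ({p : ℝ × ℝ | p.1 < p.2}).indicator (fun p => u'' p.1 * w' p.2) with hΦ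
  have hΦint : Integrable Φ ((volume.restrict (Ioc (0:ℝ) 1)).prod (volume.restrict (Ioc (0:ℝ) 1))) :=
    (Integrable.mul_prod hu''A hwint).indicator (measurableSet_lt measurable_fst measurable_snd)
  have step1 : ∀ s ∈ Ioc (0:ℝ) 1, ∫ t in Ioc (0:ℝ) 1, Φ (s, t) = - (u'' s * w_ s) := by
    intro s hsA
    have hrw : ∀ t, Φ (s, t) = (Ioi s).indicator (fun t => u'' s * w' t) t := by
      intro t
      by_cases h : s < t <;> simp [hΦ, Set.indicator_apply, h, mem_Ioi]
    have hset : Ioc (0:ℝ) 1 ∩ Ioi s = Ioc s 1 := by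
      ext t
      constructor
      · rintro ⟨⟨_, ht1⟩, hts⟩; exact ⟨hts, ht1⟩
      · rintro ⟨hts, ht1⟩; exact ⟨⟨lt_trans hsA.1 hts, ht1⟩, hts⟩
    simp_rw [hrw]
    rw [setIntegral_indicator measurableSet_Ioi, hset, integral_const_mul,
      hFTCw s (Ioc_subset_Icc_self hsA)]
    ring
  have step2 : ∀ t ∈ Ioc (0:ℝ) 1, ∫ s in Ioc (0:ℝ) 1, Φ (s, t) = (u' t - u' 0) * w' t := by
    intro t htA
    have hrw : ∀ s, Φ (s, t) = (Iio t).indicator (fun s => u'' s * w' t) s := by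
      intro s
      by_cases h : s < t <;> simp [hΦ, Set.indicator_apply, h, mem_Iio]
    have hset : Ioc (0:ℝ) 1 ∩ Iio t = Ioo 0 t := by
      ext s
      constructor
      · rintro ⟨⟨hs0, _⟩, hst⟩; exact ⟨hs0, hst⟩
      · rintro ⟨hs0, hst⟩; exact ⟨⟨hs0, le_trans (le_of_lt hst) htA.2⟩, hst⟩
    simp_rw [hrw]
    rw [setIntegral_indicator measurableSet_Iio, hset, integral_mul_const,
      ← integral_Ioc_eq_integral_Ioo, ← intervalIntegral.integral_of_le (le_of_lt htA.1)]
    have := hup t (Ioc_subset_Icc_self htA)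
    rw [this]; ring
  have hswap : ∫ s in Ioc (0:ℝ) 1, ∫ t in Ioc (0:ℝ) 1, Φ (s, t) =
      ∫ t in Ioc (0:ℝ) 1, ∫ s in Ioc (0:ℝ) 1, Φ (s, t) := by
    apply integral_integral_swap
    simpa [Function.uncurry_def] using hΦint
  have hL : ∫ s in Ioc (0:ℝ) 1, u'' s * w_ s = - ∫ s in Ioc (0:ℝ) 1, ∫ t in Ioc (0:ℝ) 1, Φ (s, t) := by
    rw [← integral_neg]
    apply setIntegral_congr_fun measurableSet_Ioc
    intro s hsA
    show u'' s * w_ s = -∫ t in Ioc (0:ℝ) 1, Φ (s, t)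
    rw [step1 s hsA]; ring
  have hu'w'int : IntegrableOn (fun t => u' t * w' t) (Ioc (0:ℝ) 1) volume := by
    have : ContinuousOn (fun t => u' t * w' t) (Icc (0:ℝ) 1) := ContinuousOn.mul hu'c hw'c
    exact this.integrableOn_Icc.mono_set Ioc_subset_Icc_self
  have hR : ∫ t in Ioc (0:ℝ) 1, ∫ s in Ioc (0:ℝ) 1, Φ (s, t) =
      ∫ t in Ioc (0:ℝ) 1, u' t * w' t := by
    rw [show (∫ t in Ioc (0:ℝ) 1, ∫ s in Ioc (0:ℝ) 1, Φ (s, t)) =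
        ∫ t in Ioc (0:ℝ) 1, (u' t * w' t - u' 0 * w' t) from
      setIntegral_congr_fun measurableSet_Ioc (fun t htA => by
        show (∫ s in Ioc (0:ℝ) 1, Φ (s, t)) = u' t * w' t - u' 0 * w' t
        rw [step2 t htA]; ring)]
    rw [integral_sub hu'w'int (hwint.const_mul (u' 0)), integral_const_mul]
    have h0 : ∫ t in Ioc (0:ℝ) 1, w' t = 0 := by
      have := ftc_tail hwd hw'c (⟨le_refl 0, zero_le_one⟩ : (0:ℝ) ∈ unitI)
      rw [hw0, hw1] at this; simpa using this
    rw [h0]; ring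
  rw [hL, hswap, hR]

lemma ibp {a : ℝ → ℝ} {lam : ℝ} {σ τ u u' w w' : ℝ → ℝ}
    (ha : IntervalIntegrable a volume 0 1)
    (hσ : IntervalIntegrable σ volume 0 1) (hτ : IntervalIntegrable τ volume 0 1)
    (hu : IsW21Solution a lam σ u u') (hw : IsW21Solution a lam τ w w')
    (hu0 : u 0 = 0) (hu1 : u 1 = 0) (hw0 : w 0 = 0) (hw1 : w 1 = 0) :
    ∫ s in Ioc (0:ℝ) 1, σ s * w s = ∫ s in Ioc (0:ℝ) 1, τ s * u s := by
  obtain ⟨hud, u'', hui, hup, hue⟩ := hu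
  obtain ⟨hwd, w'', hwi, hwp, hwe⟩ := hw
  have hu'c := deriv_continuousOn hui hup
  have hw'c := deriv_continuousOn hwi hwp
  have huc : ContinuousOn u unitI := fun t ht => (hud t ht).continuousWithinAt
  have hwc : ContinuousOn w unitI := fun t ht => (hwd t ht).continuousWithinAt
  have h1 : ∫ s in Ioc (0:ℝ) 1, u'' s * w s = - ∫ t in Ioc (0:ℝ) 1, u' t * w' t :=
    claimA hui hup hu'c hwd hw'c hw0 hw1
  have h2 : ∫ s in Ioc (0:ℝ) 1, w'' s * u s = - ∫ t in Ioc (0:ℝ) 1, w' t * u' t :=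
    claimA hwi hwp hw'c hud hu'c hu0 hu1
  have h3 : ∫ s in Ioc (0:ℝ) 1, u'' s * w s = ∫ s in Ioc (0:ℝ) 1, w'' s * u s := by
    rw [h1, h2]
    congr 1
    exact setIntegral_congr_fun measurableSet_Ioc (fun t _ => mul_comm _ _)
  have hres : volume.restrict (Ioc (0:ℝ) 1) = volume.restrict unitI :=
    Measure.restrict_congr_set Ioc_ae_eq_Icc
  have haA : IntegrableOn (fun s => a s + lam) (Ioc (0:ℝ) 1) volume :=
    (ha.add (intervalIntegrable_const)).1
  have hauw : IntegrableOn (fun s => (a s + lam) * u s * w s) (Ioc (0:ℝ) 1) volume :=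
    integrable_mul_of_bdd (integrable_mul_of_bdd haA huc) hwc
  have hawu : IntegrableOn (fun s => (a s + lam) * w s * u s) (Ioc (0:ℝ) 1) volume :=
    integrable_mul_of_bdd (integrable_mul_of_bdd haA hwc) huc
  have hσw : IntegrableOn (fun s => σ s * w s) (Ioc (0:ℝ) 1) volume :=
    integrable_mul_of_bdd hσ.1 hwc
  have hτu : IntegrableOn (fun s => τ s * u s) (Ioc (0:ℝ) 1) volume :=
    integrable_mul_of_bdd hτ.1 huc
  have hue' : ∀ᵐ t ∂(volume.restrict (Ioc (0:ℝ) 1)), u'' t + (a t + lam) * u t = σ t := by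
    rw [hres]; exact hue
  have hwe' : ∀ᵐ t ∂(volume.restrict (Ioc (0:ℝ) 1)), w'' t + (a t + lam) * w t = τ t := by
    rw [hres]; exact hwe
  have e1 : ∫ s in Ioc (0:ℝ) 1, u'' s * w s =
      (∫ s in Ioc (0:ℝ) 1, σ s * w s) - ∫ s in Ioc (0:ℝ) 1, (a s + lam) * u s * w s := by
    rw [← integral_sub hσw hauw]
    apply integral_congr_ae
    filter_upwards [hue'] with t ht
    linear_combination (w t) * ht
  have e2 : ∫ s in Ioc (0:ℝ) 1, w'' s * u s =
      (∫ s in Ioc (0:ℝ) 1, τ s * u s) - ∫ s in Ioc (0:ℝ) 1, (a s + lam) * w s * u s := by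
    rw [← integral_sub hτu hawu]
    apply integral_congr_ae
    filter_upwards [hwe'] with t ht
    linear_combination (u t) * ht
  have e3 : ∫ s in Ioc (0:ℝ) 1, (a s + lam) * u s * w s =
      ∫ s in Ioc (0:ℝ) 1, (a s + lam) * w s * u s :=
    setIntegral_congr_fun measurableSet_Ioc (fun t _ => by ring)
  rw [e1, e2, e3] at h3
  linarith

lemma green_symm {a : ℝ → ℝ} {lam : ℝ} (ha : IntervalIntegrable a volume 0 1)
    {GD : ℝ → ℝ → ℝ} (hGD : IsGreenFunction a lam DirichletBC GD) :
    ∀ t ∈ unitI, ∀ s ∈ unitI, GD t s = GD s t := by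
  obtain ⟨hGc, hGsol⟩ := hGD
  obtain ⟨C, hC⟩ := (isCompact_Icc.prod isCompact_Icc).exists_bound_of_continuousOn hGc
  -- Fix τ; show the two "partial integrals" agree
  have main : ∀ τ : ℝ → ℝ, IntervalIntegrable τ volume 0 1 → ∀ x ∈ unitI,
      (∫ s in (0:ℝ)..1, GD x s * τ s) = ∫ t in Ioc (0:ℝ) 1, GD t x * τ t := by
    intro τ hτ
    obtain ⟨uτ', hsolτ, hbcτ⟩ := hGsol τ hτ
    set uτ : ℝ → ℝ := fun t => ∫ s in (0:ℝ)..1, GD t s * τ s with huτ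
    set pτ : ℝ → ℝ := fun x => ∫ t in Ioc (0:ℝ) 1, GD t x * τ t with hpτ
    have huτc : ContinuousOn uτ unitI := hsolτ.continuousOn
    have hpτc : ContinuousOn pτ unitI := by
      apply continuousOn_of_dominated (bound := fun t => C * ‖τ t‖)
      · intro x hx
        exact (((slice_cont_left hGc hx).mono Ioc_subset_Icc_self).aestronglyMeasurable
          measurableSet_Ioc).mul hτ.1.aestronglyMeasurable
      · intro x hx
        filter_upwards [ae_restrict_mem measurableSet_Ioc] with t htA
        rw [norm_mul]
        exact mul_le_mul_of_nonneg_right (hC (t, x) ⟨Ioc_subset_Icc_self htA, hx⟩) (norm_nonneg _)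
      · exact hτ.1.norm.const_mul C
      · filter_upwards [ae_restrict_mem measurableSet_Ioc] with t htA
        exact ((slice_cont_right hGc (Ioc_subset_Icc_self htA)).mul continuousOn_const)
    have C2 : ∀ σ : ℝ → ℝ, IntervalIntegrable σ volume 0 1 →
        ∫ s in Ioc (0:ℝ) 1, σ s * uτ s = ∫ s in Ioc (0:ℝ) 1, σ s * pτ s := by
      intro σ hσ
      obtain ⟨uσ', hsolσ, hbcσ⟩ := hGsol σ hσ
      have hibp := ibp ha hσ hτ hsolσ hsolτ hbcσ.1 hbcσ.2 hbcτ.1 hbcτ.2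
      rw [hibp]
      -- Fubini on the square
      set Ψ : ℝ × ℝ → ℝ := fun p => τ p.1 * σ p.2 * GD p.1 p.2 with hΨ
      have hbase : Integrable (fun p : ℝ × ℝ => τ p.1 * σ p.2)
          ((volume.restrict (Ioc (0:ℝ) 1)).prod (volume.restrict (Ioc (0:ℝ) 1))) :=
        Integrable.mul_prod hτ.1 hσ.1
      have hGDm : AEStronglyMeasurable (fun p : ℝ × ℝ => GD p.1 p.2)
          ((volume.restrict (Ioc (0:ℝ) 1)).prod (volume.restrict (Ioc (0:ℝ) 1))) := by
        rw [Measure.prod_restrict]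
        exact (hGc.mono (prod_mono Ioc_subset_Icc_self Ioc_subset_Icc_self)).aestronglyMeasurable
          (measurableSet_Ioc.prod measurableSet_Ioc)
      have hΨint : Integrable Ψ
          ((volume.restrict (Ioc (0:ℝ) 1)).prod (volume.restrict (Ioc (0:ℝ) 1))) := by
        have hbint : Integrable (fun p : ℝ × ℝ => C * (‖τ p.1‖ * ‖σ p.2‖))
            ((volume.restrict (Ioc (0:ℝ) 1)).prod (volume.restrict (Ioc (0:ℝ) 1))) := by
          simpa [norm_mul] using hbase.norm.const_mul C
        apply Integrable.mono' hbint (hbase.aestronglyMeasurable.mul hGDm)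
        rw [Measure.prod_restrict]
        filter_upwards [ae_restrict_mem (measurableSet_Ioc.prod measurableSet_Ioc)] with p hp
        simp only [Pi.mul_apply, norm_mul]
        rw [mul_comm (‖τ p.1‖ * ‖σ p.2‖)]
        exact mul_le_mul_of_nonneg_right
          (hC p ⟨Ioc_subset_Icc_self hp.1, Ioc_subset_Icc_self hp.2⟩)
          (mul_nonneg (norm_nonneg _) (norm_nonneg _))
      have hswap : ∫ t in Ioc (0:ℝ) 1, ∫ s in Ioc (0:ℝ) 1, Ψ (t, s) =
          ∫ s in Ioc (0:ℝ) 1, ∫ t in Ioc (0:ℝ) 1, Ψ (t, s) := by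
        apply integral_integral_swap
        simpa [Function.uncurry_def] using hΨint
      have e1 : ∫ t in Ioc (0:ℝ) 1, τ t * (∫ s in (0:ℝ)..1, GD t s * σ s) =
          ∫ t in Ioc (0:ℝ) 1, ∫ s in Ioc (0:ℝ) 1, Ψ (t, s) := by
        apply setIntegral_congr_fun measurableSet_Ioc
        intro t htA
        show τ t * (∫ s in (0:ℝ)..1, GD t s * σ s) = ∫ s in Ioc (0:ℝ) 1, Ψ (t, s)
        rw [intervalIntegral.integral_of_le zero_le_one, ← integral_const_mul]
        apply setIntegral_congr_fun measurableSet_Ioc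
        intro s _
        show τ t * (GD t s * σ s) = Ψ (t, s)
        rw [hΨ]; ring
      have e2 : ∫ s in Ioc (0:ℝ) 1, ∫ t in Ioc (0:ℝ) 1, Ψ (t, s) =
          ∫ s in Ioc (0:ℝ) 1, σ s * pτ s := by
        apply setIntegral_congr_fun measurableSet_Ioc
        intro s hsA
        show (∫ t in Ioc (0:ℝ) 1, Ψ (t, s)) = σ s * pτ s
        have : σ s * pτ s = σ s * ∫ t in Ioc (0:ℝ) 1, GD t s * τ t := rfl
        rw [this, ← integral_const_mul]
        apply setIntegral_congr_fun measurableSet_Ioc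
        intro t _
        show Ψ (t, s) = σ s * (GD t s * τ t)
        rw [hΨ]; ring
      exact (e1.trans hswap).trans e2
    have hz : ∀ x ∈ unitI, uτ x - pτ x = 0 := by
      apply vanish (f := fun x => uτ x - pτ x) (huτc.sub hpτc)
      intro σ hσ
      have hσuτ : IntegrableOn (fun s => σ s * uτ s) (Ioc (0:ℝ) 1) volume :=
        integrable_mul_of_bdd hσ.1 huτc
      have hσpτ : IntegrableOn (fun s => σ s * pτ s) (Ioc (0:ℝ) 1) volume :=
        integrable_mul_of_bdd hσ.1 hpτc
      have hsplit : ∫ s in Ioc (0:ℝ) 1, (uτ s - pτ s) * σ s =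
          (∫ s in Ioc (0:ℝ) 1, σ s * uτ s) - ∫ s in Ioc (0:ℝ) 1, σ s * pτ s := by
        rw [← integral_sub hσuτ hσpτ]
        apply setIntegral_congr_fun measurableSet_Ioc
        intro s _; ring
      rw [hsplit, C2 σ hσ, sub_self]
    intro x hx
    exact sub_eq_zero.mp (hz x hx)
  intro t ht s hs
  have hv : ∀ τ : ℝ → ℝ, IntervalIntegrable τ volume 0 1 →
      ∫ r in Ioc (0:ℝ) 1, (GD s r - GD r s) * τ r = 0 := by
    intro τ hτ
    have h1 := main τ hτ s hs
    rw [intervalIntegral.integral_of_le zero_le_one] at h1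
    have hint1 : IntegrableOn (fun r => GD s r * τ r) (Ioc (0:ℝ) 1) volume :=
      (hτ.continuousOn_mul (by rw [uIcc_of_le zero_le_one]; exact slice_cont_right hGc hs)).1
    have hint2 : IntegrableOn (fun r => GD r s * τ r) (Ioc (0:ℝ) 1) volume :=
      (hτ.continuousOn_mul (by rw [uIcc_of_le zero_le_one]; exact slice_cont_left hGc hs)).1
    have hsplit : ∫ r in Ioc (0:ℝ) 1, (GD s r - GD r s) * τ r =
        (∫ r in Ioc (0:ℝ) 1, GD s r * τ r) - ∫ r in Ioc (0:ℝ) 1, GD r s * τ r := by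
      rw [← integral_sub hint1 hint2]
      apply setIntegral_congr_fun measurableSet_Ioc
      intro r _; ring
    rw [hsplit, h1, sub_self]
  have hcf : ContinuousOn (fun r => GD s r - GD r s) unitI :=
    (slice_cont_right hGc hs).sub (slice_cont_left hGc hs)
  have := vanish hcf hv t ht
  have : GD s t - GD t s = 0 := this
  linarith

lemma split_sub {g1 g2 σ : ℝ → ℝ} (hg1 : ContinuousOn g1 unitI) (hg2 : ContinuousOn g2 unitI)
    (hσ : IntervalIntegrable σ volume 0 1) :
    ∫ x in Ioc (0:ℝ) 1, (g1 x - g2 x) * σ x =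
      (∫ x in (0:ℝ)..1, g1 x * σ x) - ∫ x in (0:ℝ)..1, g2 x * σ x := by
  have h1 : IntegrableOn (fun x => g1 x * σ x) (Ioc (0:ℝ) 1) volume :=
    (hσ.continuousOn_mul (by rw [uIcc_of_le zero_le_one]; exact hg1)).1
  have h2 : IntegrableOn (fun x => g2 x * σ x) (Ioc (0:ℝ) 1) volume :=
    (hσ.continuousOn_mul (by rw [uIcc_of_le zero_le_one]; exact hg2)).1
  rw [intervalIntegral.integral_of_le zero_le_one, intervalIntegral.integral_of_le zero_le_one,
    ← integral_sub h1 h2]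
  apply setIntegral_congr_fun measurableSet_Ioc
  intro x _; ring

lemma decomp {G1 G2 : ℝ → ℝ} (hG1 : ContinuousOn G1 unitI) (hG2 : ContinuousOn G2 unitI)
    {σ : ℝ → ℝ} (hσ : IntervalIntegrable σ volume 0 1) (A B : ℝ) :
    ∫ x in Ioc (0:ℝ) 1, (G1 x * A - G2 x * B) * σ x
      = A * (∫ x in Ioc (0:ℝ) 1, G1 x * σ x) - B * ∫ x in Ioc (0:ℝ) 1, G2 x * σ x := by
  have h1 : IntegrableOn (fun x => G1 x * σ x) (Ioc (0:ℝ) 1) volume :=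
    (hσ.continuousOn_mul (by rw [uIcc_of_le zero_le_one]; exact hG1)).1
  have h2 : IntegrableOn (fun x => G2 x * σ x) (Ioc (0:ℝ) 1) volume :=
    (hσ.continuousOn_mul (by rw [uIcc_of_le zero_le_one]; exact hG2)).1
  rw [← integral_const_mul A, ← integral_const_mul B, ← integral_sub (h1.const_mul A) (h2.const_mul B)]
  apply setIntegral_congr_fun measurableSet_Ioc
  intro x _; ring

lemma key1 {a : ℝ → ℝ} {lam : ℝ} {GP GD : ℝ → ℝ → ℝ}
    (hND : Nonresonant a lam DirichletBC)
    (hGP : IsGreenFunction a lam PeriodicBC GP)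
    (hGD : IsGreenFunction a lam DirichletBC GD)
    {σ τ : ℝ → ℝ} (hσ : IntervalIntegrable σ volume 0 1) (hτ : IntervalIntegrable τ volume 0 1)
    {t : ℝ} (ht : t ∈ unitI) :
    ((∫ s in (0:ℝ)..1, GP 1 s * τ s) - ∫ s in (0:ℝ)..1, GD 1 s * τ s) *
      ((∫ s in (0:ℝ)..1, GP t s * σ s) - ∫ s in (0:ℝ)..1, GD t s * σ s) =
    ((∫ s in (0:ℝ)..1, GP 1 s * σ s) - ∫ s in (0:ℝ)..1, GD 1 s * σ s) *
      ((∫ s in (0:ℝ)..1, GP t s * τ s) - ∫ s in (0:ℝ)..1, GD t s * τ s) := by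
  obtain ⟨uPσ', hPσ, hbPσ⟩ := hGP.2 σ hσ
  obtain ⟨uDσ', hDσ, hbDσ⟩ := hGD.2 σ hσ
  obtain ⟨uPτ', hPτ, hbPτ⟩ := hGP.2 τ hτ
  obtain ⟨uDτ', hDτ, hbDτ⟩ := hGD.2 τ hτ
  have hP0σ : (∫ s in (0:ℝ)..1, GP 0 s * σ s) = ∫ s in (0:ℝ)..1, GP 1 s * σ s := hbPσ.1
  have hP0τ : (∫ s in (0:ℝ)..1, GP 0 s * τ s) = ∫ s in (0:ℝ)..1, GP 1 s * τ s := hbPτ.1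
  have hD0σ : (∫ s in (0:ℝ)..1, GD 0 s * σ s) = 0 := hbDσ.1
  have hD1σ : (∫ s in (0:ℝ)..1, GD 1 s * σ s) = 0 := hbDσ.2
  have hD0τ : (∫ s in (0:ℝ)..1, GD 0 s * τ s) = 0 := hbDτ.1
  have hD1τ : (∫ s in (0:ℝ)..1, GD 1 s * τ s) = 0 := hbDτ.2
  have hvσ := (IsW21Solution.combo 1 (-1) hPσ hDσ).congr_sigma (σ2 := fun _ => 0)
    (fun x => by ring)
  have hvτ := (IsW21Solution.combo 1 (-1) hPτ hDτ).congr_sigma (σ2 := fun _ => 0)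
    (fun x => by ring)
  have hw := (IsW21Solution.combo
      ((∫ s in (0:ℝ)..1, GP 1 s * τ s) - ∫ s in (0:ℝ)..1, GD 1 s * τ s)
      (-((∫ s in (0:ℝ)..1, GP 1 s * σ s) - ∫ s in (0:ℝ)..1, GD 1 s * σ s))
      hvσ hvτ).congr_sigma (σ2 := fun _ => 0) (fun x => by ring)
  have hbc : DirichletBC
      (fun x => ((∫ s in (0:ℝ)..1, GP 1 s * τ s) - ∫ s in (0:ℝ)..1, GD 1 s * τ s) *
          (1 * (∫ s in (0:ℝ)..1, GP x s * σ s) + -1 * ∫ s in (0:ℝ)..1, GD x s * σ s) +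
        (-((∫ s in (0:ℝ)..1, GP 1 s * σ s) - ∫ s in (0:ℝ)..1, GD 1 s * σ s)) *
          (1 * (∫ s in (0:ℝ)..1, GP x s * τ s) + -1 * ∫ s in (0:ℝ)..1, GD x s * τ s))
      (fun x => ((∫ s in (0:ℝ)..1, GP 1 s * τ s) - ∫ s in (0:ℝ)..1, GD 1 s * τ s) *
          (1 * uPσ' x + -1 * uDσ' x) +
        (-((∫ s in (0:ℝ)..1, GP 1 s * σ s) - ∫ s in (0:ℝ)..1, GD 1 s * σ s)) *
          (1 * uPτ' x + -1 * uDτ' x)) := by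
    constructor
    · show ((∫ s in (0:ℝ)..1, GP 1 s * τ s) - ∫ s in (0:ℝ)..1, GD 1 s * τ s) *
          (1 * (∫ s in (0:ℝ)..1, GP 0 s * σ s) + -1 * ∫ s in (0:ℝ)..1, GD 0 s * σ s) +
        (-((∫ s in (0:ℝ)..1, GP 1 s * σ s) - ∫ s in (0:ℝ)..1, GD 1 s * σ s)) *
          (1 * (∫ s in (0:ℝ)..1, GP 0 s * τ s) + -1 * ∫ s in (0:ℝ)..1, GD 0 s * τ s) = 0
      rw [hP0σ, hP0τ, hD0σ, hD0τ, hD1σ, hD1τ]; ring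
    · show ((∫ s in (0:ℝ)..1, GP 1 s * τ s) - ∫ s in (0:ℝ)..1, GD 1 s * τ s) *
          (1 * (∫ s in (0:ℝ)..1, GP 1 s * σ s) + -1 * ∫ s in (0:ℝ)..1, GD 1 s * σ s) +
        (-((∫ s in (0:ℝ)..1, GP 1 s * σ s) - ∫ s in (0:ℝ)..1, GD 1 s * σ s)) *
          (1 * (∫ s in (0:ℝ)..1, GP 1 s * τ s) + -1 * ∫ s in (0:ℝ)..1, GD 1 s * τ s) = 0
      ring
  have hz := hND _ _ hw hbc t ht
  have hz' : ((∫ s in (0:ℝ)..1, GP 1 s * τ s) - ∫ s in (0:ℝ)..1, GD 1 s * τ s) *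
      (1 * (∫ s in (0:ℝ)..1, GP t s * σ s) + -1 * ∫ s in (0:ℝ)..1, GD t s * σ s) +
    (-((∫ s in (0:ℝ)..1, GP 1 s * σ s) - ∫ s in (0:ℝ)..1, GD 1 s * σ s)) *
      (1 * (∫ s in (0:ℝ)..1, GP t s * τ s) + -1 * ∫ s in (0:ℝ)..1, GD t s * τ s) = 0 := hz
  linear_combination hz'

lemma key2 {a : ℝ → ℝ} {lam : ℝ} {GP GD : ℝ → ℝ → ℝ}
    (hND : Nonresonant a lam DirichletBC)
    (hGP : IsGreenFunction a lam PeriodicBC GP)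
    (hGD : IsGreenFunction a lam DirichletBC GD)
    {t s r : ℝ} (ht : t ∈ unitI) (hs : s ∈ unitI) (hr : r ∈ unitI) :
    (GP 1 s - GD 1 s) * (GP t r - GD t r) = (GP t s - GD t s) * (GP 1 r - GD 1 r) := by
  have hK1 : ContinuousOn (fun x => GP 1 x - GD 1 x) unitI :=
    (slice_cont_right hGP.1 one_mem_unitI).sub (slice_cont_right hGD.1 one_mem_unitI)
  have hKt : ContinuousOn (fun x => GP t x - GD t x) unitI :=
    (slice_cont_right hGP.1 ht).sub (slice_cont_right hGD.1 ht)
  -- first pointwise reduction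
  have h2a : ∀ σ : ℝ → ℝ, IntervalIntegrable σ volume 0 1 → ∀ x ∈ unitI,
      (GP 1 x - GD 1 x) * ((∫ y in (0:ℝ)..1, GP t y * σ y) - ∫ y in (0:ℝ)..1, GD t y * σ y) =
      (GP t x - GD t x) * ((∫ y in (0:ℝ)..1, GP 1 y * σ y) - ∫ y in (0:ℝ)..1, GD 1 y * σ y) := by
    intro σ hσ
    have hc : ContinuousOn (fun x => (GP 1 x - GD 1 x) *
        ((∫ y in (0:ℝ)..1, GP t y * σ y) - ∫ y in (0:ℝ)..1, GD t y * σ y) -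
        (GP t x - GD t x) *
        ((∫ y in (0:ℝ)..1, GP 1 y * σ y) - ∫ y in (0:ℝ)..1, GD 1 y * σ y)) unitI :=
      (hK1.mul continuousOn_const).sub (hKt.mul continuousOn_const)
    have hvan := vanish hc ?_
    · intro x hx
      have := hvan x hx
      linarith
    · intro τ hτ
      rw [decomp hK1 hKt hτ _ _]
      rw [split_sub (slice_cont_right hGP.1 ht) (slice_cont_right hGD.1 ht) hτ,
        split_sub (slice_cont_right hGP.1 one_mem_unitI) (slice_cont_right hGD.1 one_mem_unitI) hτ]
      linear_combination key1 hND hGP hGD hσ hτ ht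
  -- second pointwise reduction
  have hc2 : ContinuousOn (fun y => (GP t y - GD t y) * (GP 1 s - GD 1 s) -
      (GP 1 y - GD 1 y) * (GP t s - GD t s)) unitI :=
    (hKt.mul continuousOn_const).sub (hK1.mul continuousOn_const)
  have hvan2 := vanish hc2 ?_
  · have := hvan2 r hr
    linear_combination this
  · intro σ hσ
    rw [decomp hKt hK1 hσ _ _]
    rw [split_sub (slice_cont_right hGP.1 ht) (slice_cont_right hGD.1 ht) hσ,
      split_sub (slice_cont_right hGP.1 one_mem_unitI) (slice_cont_right hGD.1 one_mem_unitI) hσ]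
    linear_combination h2a σ hσ s hs

/-- `G_D[λ](t,s) = G_P[λ](t,s) − (G_P[λ](t,0)/G_P[λ](1,0))·G_P[λ](1,s)`. -/
theorem stmt17 (a : ℝ → ℝ) (ha : IntervalIntegrable a volume 0 1) (lam : ℝ)
    (hNP : Nonresonant a lam PeriodicBC) (hND : Nonresonant a lam DirichletBC)
    (GP GD : ℝ → ℝ → ℝ)
    (hGP : IsGreenFunction a lam PeriodicBC GP)
    (hGD : IsGreenFunction a lam DirichletBC GD)
    (hne : GP 1 0 ≠ 0) :
    ∀ t ∈ unitI, ∀ s ∈ unitI,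
      GD t s = GP t s - (GP t 0 / GP 1 0) * GP 1 s := by
  have hsymm := green_symm ha hGD
  have hGD0 : ∀ s ∈ unitI, GD 0 s = 0 := by
    apply vanish (slice_cont_right hGD.1 zero_mem_unitI)
    intro σ hσ
    obtain ⟨u', hsol, hbc⟩ := hGD.2 σ hσ
    have h0 : (∫ s in (0:ℝ)..1, GD 0 s * σ s) = 0 := hbc.1
    rw [← intervalIntegral.integral_of_le zero_le_one]
    exact h0
  have hGD1 : ∀ s ∈ unitI, GD 1 s = 0 := by
    apply vanish (slice_cont_right hGD.1 one_mem_unitI)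
    intro σ hσ
    obtain ⟨u', hsol, hbc⟩ := hGD.2 σ hσ
    have h0 : (∫ s in (0:ℝ)..1, GD 1 s * σ s) = 0 := hbc.2
    rw [← intervalIntegral.integral_of_le zero_le_one]
    exact h0
  intro t ht s hs
  have hk := key2 hND hGP hGD ht zero_mem_unitI hs
  rw [hGD1 0 zero_mem_unitI, (hsymm t ht 0 zero_mem_unitI).trans (hGD0 t ht),
    hGD1 s hs] at hk
  field_simp
  linear_combination -hk
end
end

section
/- Let f : I × ℝ → ℝ satisfy the Lipschitz condition (H₂), with f(·,0) Lebesgue integrable. Suppose L[λ] is nonresonant both for the Dirichlet and the Periodic boundary conditions, G_P[λ](1,0) ≠ 0, and let u_D ∈ W^{2,1}(I) satisfy u_D''(t)+(a(t)+λ)u_D(t) = f(t,u_D(t)) a.e. on I with u_D(0)=u_D(1)=0, and u_P ∈ W^{2,1}(I) satisfy u_P''(t)+(a(t)+λ)u_P(t) = f(t,u_P(t)) a.e. on I with u_P(0)=u_P(1) and u_P'(0)=u_P'(1). Define K₁ = max_{t∈I} ∫₀¹ |G_P[λ](t,s)| K(s) ds, K₂ = max_{t∈I} |G_P[λ](t,0)/G_P[λ](1,0)|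 · ∫₀¹ |G_P[λ](1,s)| K(s) ds, and K₃ = max_{t∈I} |G_P[λ](t,0)/G_P[λ](1,0)| · ∫₀¹ |G_P[λ](1,s) f(s,0)| ds. If K₁ < 1, then ‖u_D − u_P‖_∞ ≤ (K₂ ‖u_D‖_∞ + K₃) / (1 − K₁). -/
open MeasureTheory Set

noncomputable section

namespace Stmt18Aux

open intervalIntegral

lemma ii_iff {g : ℝ → ℝ} :
    IntervalIntegrable g volume 0 1 ↔ IntegrableOn g (Ioc 0 1) volume :=
  intervalIntegrable_iff_integrableOn_Ioc_of_le zero_le_one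

lemma contOn_mul_ii {φ g : ℝ → ℝ} (hφ : ContinuousOn φ (Icc 0 1))
    (hg : IntervalIntegrable g volume 0 1) :
    IntervalIntegrable (fun t => φ t * g t) volume 0 1 := by
  rw [ii_iff] at hg ⊢
  obtain ⟨C, hC⟩ := isCompact_Icc.exists_bound_of_continuousOn hφ
  refine hg.bdd_mul (c := C) ?_ ?_
  · exact (hφ.aestronglyMeasurable measurableSet_Icc).mono_measure
      (Measure.restrict_mono Ioc_subset_Icc_self le_rfl)
  · filter_upwards [ae_restrict_mem measurableSet_Ioc] with x hx
    exact hC x (Ioc_subset_Icc_self hx)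

lemma contOn_primitive {g : ℝ → ℝ} (hg : IntervalIntegrable g volume 0 1) :
    ContinuousOn (fun t => ∫ s in (0:ℝ)..t, g s) (Icc 0 1) := by
  have h := intervalIntegral.continuousOn_primitive_interval
    (f := g) (μ := volume) (a := 0) (b := 1) ?_
  · simpa [uIcc_of_le (zero_le_one' ℝ)] using h
  · rw [uIcc_of_le (zero_le_one' ℝ), integrableOn_Icc_iff_integrableOn_Ioc]
    exact ii_iff.mp hg

/-- Data of a `W^{2,1}` function on `[0,1]`. -/
structure SolData (u u' u'' : ℝ → ℝ) : Prop where
  hd : ∀ t ∈ Icc (0:ℝ) 1, HasDerivWithinAt u (u' t) (Icc 0 1) t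
  hi : IntervalIntegrable u'' volume 0 1
  hrep : ∀ t ∈ Icc (0:ℝ) 1, u' t = u' 0 + ∫ s in (0:ℝ)..t, u'' s

namespace SolData
variable {u u' u'' : ℝ → ℝ}

lemma contU (D : SolData u u' u'') : ContinuousOn u (Icc 0 1) := fun t ht => (D.hd t ht).continuousWithinAt

lemma contU' (D : SolData u u' u'') : ContinuousOn u' (Icc 0 1) := by
  refine ContinuousOn.congr (f := fun t => u' 0 + ∫ s in (0:ℝ)..t, u'' s) ?_ ?_
  · exact continuousOn_const.add (contOn_primitive D.hi)
  · exact fun t ht => D.hrep t ht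

lemma iiU' (D : SolData u u' u'') : IntervalIntegrable u' volume 0 1 := by
  have := D.contU'
  rw [← uIcc_of_le (zero_le_one' ℝ)] at this
  exact this.intervalIntegrable

lemma ftc (D : SolData u u' u'') : ∀ t ∈ Icc (0:ℝ) 1, ∫ s in (0:ℝ)..t, u' s = u t - u 0 := by
  intro t ht
  refine integral_eq_sub_of_hasDeriv_right_of_le ht.1
    (D.contU.mono (Icc_subset_Icc le_rfl ht.2)) ?_ ?_
  · intro x hx
    have hx' : x ∈ Ioo (0:ℝ) 1 := ⟨hx.1, lt_of_lt_of_le hx.2 ht.2⟩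
    have := (D.hd x (Ioo_subset_Icc_self hx')).hasDerivAt
      (Icc_mem_nhds hx'.1 hx'.2)
    exact this.hasDerivWithinAt
  · refine D.iiU'.mono_set ?_
    rw [uIcc_of_le ht.1, uIcc_of_le (zero_le_one' ℝ)]
    exact Icc_subset_Icc le_rfl ht.2

lemma int_u'' (D : SolData u u' u'') : ∫ s in (0:ℝ)..1, u'' s = u' 1 - u' 0 := by
  have := D.hrep 1 (by norm_num)
  linarith

end SolData

lemma fubini_step {F' g'' : ℝ → ℝ} (hF' : IntervalIntegrable F' volume 0 1)
    (hg'' : IntervalIntegrable g'' volume 0 1) :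
    ∫ t in (0:ℝ)..1, (∫ s in (0:ℝ)..t, F' s) * g'' t
      = ∫ s in (0:ℝ)..1, F' s * (∫ t in s..(1:ℝ), g'' t) := by
  set Φ : ℝ × ℝ → ℝ :=
    fun p => {q : ℝ × ℝ | q.2 ≤ q.1}.indicator (fun q => g'' q.1 * F' q.2) p with hΦ
  have hInt : Integrable Φ
      ((volume.restrict (Ioc (0:ℝ) 1)).prod (volume.restrict (Ioc (0:ℝ) 1))) := by
    have base : Integrable (fun p : ℝ × ℝ => g'' p.1 * F' p.2)
        ((volume.restrict (Ioc (0:ℝ) 1)).prod (volume.restrict (Ioc (0:ℝ) 1))) :=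
      (ii_iff.mp hg'').mul_prod (ii_iff.mp hF')
    exact base.indicator (measurableSet_le measurable_snd measurable_fst)
  have L1 : ∫ t in Ioc (0:ℝ) 1, (∫ s in (0:ℝ)..t, F' s) * g'' t
      = ∫ t in Ioc (0:ℝ) 1, ∫ s in Ioc (0:ℝ) 1, Φ (t, s) := by
    refine setIntegral_congr_fun measurableSet_Ioc (fun t ht => ?_)
    have e1 : (fun s => Φ (t, s)) = (Iic t).indicator (fun s => g'' t * F' s) := by
      funext s
      by_cases h : s ≤ t <;> simp [hΦ, Set.indicator_apply, h]
    rw [e1, MeasureTheory.integral_indicator measurableSet_Iic,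
      Measure.restrict_restrict measurableSet_Iic]
    have e2 : Iic t ∩ Ioc (0:ℝ) 1 = Ioc 0 t := by
      ext x
      simp only [mem_inter_iff, mem_Iic, mem_Ioc]
      constructor
      · rintro ⟨h1, h2, h3⟩; exact ⟨h2, h1⟩
      · rintro ⟨h1, h2⟩; exact ⟨h2, h1, h2.trans ht.2⟩
    rw [e2, MeasureTheory.integral_const_mul, integral_of_le ht.1.le]
    exact mul_comm _ _
  have L2 : ∫ t in Ioc (0:ℝ) 1, ∫ s in Ioc (0:ℝ) 1, Φ (t, s)
      = ∫ s in Ioc (0:ℝ) 1, ∫ t in Ioc (0:ℝ) 1, Φ (t, s) :=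
    integral_integral_swap hInt
  have L3 : ∫ s in Ioc (0:ℝ) 1, ∫ t in Ioc (0:ℝ) 1, Φ (t, s)
      = ∫ s in Ioc (0:ℝ) 1, F' s * (∫ t in s..(1:ℝ), g'' t) := by
    refine setIntegral_congr_fun measurableSet_Ioc (fun s hs => ?_)
    have e1 : (fun t => Φ (t, s)) = (Ici s).indicator (fun t => g'' t * F' s) := by
      funext t
      by_cases h : s ≤ t <;> simp [hΦ, Set.indicator_apply, h]
    rw [e1, MeasureTheory.integral_indicator measurableSet_Ici,
      Measure.restrict_restrict measurableSet_Ici]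
    have e2 : Ici s ∩ Ioc (0:ℝ) 1 = Icc s 1 := by
      ext x
      simp only [mem_inter_iff, mem_Ici, mem_Ioc, mem_Icc]
      constructor
      · rintro ⟨h1, _, h3⟩; exact ⟨h1, h3⟩
      · rintro ⟨h1, h2⟩; exact ⟨h1, hs.1.trans_le h1, h2⟩
    rw [e2, integral_Icc_eq_integral_Ioc, ← integral_of_le hs.2,
      intervalIntegral.integral_mul_const]
    exact mul_comm _ _
  rw [integral_of_le zero_le_one, integral_of_le zero_le_one, L1, L2, L3]


lemma ibp {F F' F'' g g' g'' : ℝ → ℝ} (DF : SolData F F' F'') (Dg : SolData g g' g'') :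
    ∫ t in (0:ℝ)..1, F t * g'' t
      = F 1 * g' 1 - F 0 * g' 0 - ∫ t in (0:ℝ)..1, F' t * g' t := by
  have hFrep : ∀ t ∈ Icc (0:ℝ) 1, F t = F 0 + ∫ s in (0:ℝ)..t, F' s := by
    intro t ht; have := DF.ftc t ht; linarith
  have step1 : ∫ t in (0:ℝ)..1, F t * g'' t
      = ∫ t in (0:ℝ)..1, (F 0 * g'' t + (∫ s in (0:ℝ)..t, F' s) * g'' t) := by
    refine integral_congr (fun t ht => ?_)
    rw [uIcc_of_le (zero_le_one' ℝ)] at ht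
    rw [hFrep t ht]; ring
  have i1 : IntervalIntegrable (fun t => F 0 * g'' t) volume 0 1 := Dg.hi.const_mul _
  have i2 : IntervalIntegrable (fun t => (∫ s in (0:ℝ)..t, F' s) * g'' t) volume 0 1 :=
    contOn_mul_ii (contOn_primitive DF.iiU') Dg.hi
  have step2 : ∫ t in (0:ℝ)..1, (F 0 * g'' t + (∫ s in (0:ℝ)..t, F' s) * g'' t)
      = F 0 * (∫ t in (0:ℝ)..1, g'' t)
        + ∫ t in (0:ℝ)..1, (∫ s in (0:ℝ)..t, F' s) * g'' t := by
    rw [integral_add i1 i2, intervalIntegral.integral_const_mul]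
  have step3 : ∫ s in (0:ℝ)..1, F' s * (∫ t in s..(1:ℝ), g'' t)
      = ∫ s in (0:ℝ)..1, (F' s * g' 1 - F' s * g' s) := by
    refine integral_congr (fun s hs => ?_)
    rw [uIcc_of_le (zero_le_one' ℝ)] at hs
    have hsub : (∫ t in (0:ℝ)..1, g'' t) - ∫ t in (0:ℝ)..s, g'' t
        = ∫ t in s..(1:ℝ), g'' t := by
      refine integral_interval_sub_left Dg.hi ?_
      refine Dg.hi.mono_set ?_
      rw [uIcc_of_le hs.1, uIcc_of_le (zero_le_one' ℝ)]
      exact Icc_subset_Icc le_rfl hs.2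
    have h1 := Dg.hrep 1 (by norm_num)
    have h2 := Dg.hrep s hs
    have : (∫ t in s..(1:ℝ), g'' t) = g' 1 - g' s := by
      rw [← hsub]; linarith
    rw [this]; ring
  have i3 : IntervalIntegrable (fun s => F' s * g' 1) volume 0 1 := DF.iiU'.mul_const _
  have i4 : IntervalIntegrable (fun s => F' s * g' s) volume 0 1 := by
    have : ContinuousOn (fun s => F' s * g' s) (uIcc (0:ℝ) 1) := by
      rw [uIcc_of_le (zero_le_one' ℝ)]
      exact DF.contU'.mul Dg.contU'
    exact this.intervalIntegrable
  have step4 : ∫ s in (0:ℝ)..1, (F' s * g' 1 - F' s * g' s)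
      = (∫ s in (0:ℝ)..1, F' s) * g' 1 - ∫ s in (0:ℝ)..1, F' s * g' s := by
    rw [integral_sub i3 i4, intervalIntegral.integral_mul_const]
  have hF1 : ∫ s in (0:ℝ)..1, F' s = F 1 - F 0 := DF.ftc 1 (by norm_num)
  have hg1 : ∫ t in (0:ℝ)..1, g'' t = g' 1 - g' 0 := Dg.int_u''
  rw [step1, step2, fubini_step DF.iiU' Dg.hi, step3, step4, hF1, hg1]
  ring

lemma wronskian {u u' u'' v v' v'' : ℝ → ℝ}
    (Du : SolData u u' u'') (Dv : SolData v v' v'') :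
    ∫ t in (0:ℝ)..1, (u t * v'' t - v t * u'' t)
      = u 1 * v' 1 - u 0 * v' 0 - (v 1 * u' 1 - v 0 * u' 0) := by
  have i1 : IntervalIntegrable (fun t => u t * v'' t) volume 0 1 :=
    contOn_mul_ii Du.contU Dv.hi
  have i2 : IntervalIntegrable (fun t => v t * u'' t) volume 0 1 :=
    contOn_mul_ii Dv.contU Du.hi
  have e1 := ibp Du Dv
  have e2 := ibp Dv Du
  have ecomm : ∫ t in (0:ℝ)..1, v' t * u' t = ∫ t in (0:ℝ)..1, u' t * v' t :=
    integral_congr (fun t _ => mul_comm _ _)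
  rw [integral_sub i1 i2, e1, e2, ecomm]
  ring

lemma unitI_eq : unitI = Icc (0:ℝ) 1 := rfl

lemma solData_of_IsW21 {a : ℝ → ℝ} {lam : ℝ} {σ u u' : ℝ → ℝ}
    (h : IsW21Solution a lam σ u u') :
    ∃ u'' : ℝ → ℝ, SolData u u' u'' ∧
      (∀ᵐ t ∂(volume.restrict (Icc (0:ℝ) 1)), u'' t + (a t + lam) * u t = σ t) := by
  obtain ⟨hd, u'', hi, hrep, hae⟩ := h
  exact ⟨u'', ⟨hd, hi, hrep⟩, hae⟩

lemma ae_Ioc_of_ae_Icc {p : ℝ → Prop} (h : ∀ᵐ t ∂(volume.restrict (Icc (0:ℝ) 1)), p t) :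
    ∀ᵐ t ∂(volume.restrict (Ioc (0:ℝ) 1)), p t := by
  rwa [restrict_Ioc_eq_restrict_Icc]

lemma pairing {a : ℝ → ℝ} (ha : IntervalIntegrable a volume 0 1) {lam : ℝ}
    {σ τ u u' v v' : ℝ → ℝ}
    (hu : IsW21Solution a lam σ u u') (hv : IsW21Solution a lam τ v v')
    (hτ : IntervalIntegrable τ volume 0 1) (hσ : IntervalIntegrable σ volume 0 1) :
    (∫ t in (0:ℝ)..1, u t * τ t) - ∫ t in (0:ℝ)..1, v t * σ t
      = u 1 * v' 1 - u 0 * v' 0 - (v 1 * u' 1 - v 0 * u' 0) := by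
  obtain ⟨u'', Du, haeu⟩ := solData_of_IsW21 hu
  obtain ⟨v'', Dv, haev⟩ := solData_of_IsW21 hv
  have hal : IntervalIntegrable (fun t => a t + lam) volume 0 1 :=
    ha.add intervalIntegrable_const
  have iuv'' : IntervalIntegrable (fun t => u t * v'' t) volume 0 1 :=
    contOn_mul_ii Du.contU Dv.hi
  have ivu'' : IntervalIntegrable (fun t => v t * u'' t) volume 0 1 :=
    contOn_mul_ii Dv.contU Du.hi
  have iul : IntervalIntegrable (fun t => u t * v t * (a t + lam)) volume 0 1 :=
    contOn_mul_ii (Du.contU.mul Dv.contU) hal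
  have ivl : IntervalIntegrable (fun t => v t * u t * (a t + lam)) volume 0 1 :=
    contOn_mul_ii (Dv.contU.mul Du.contU) hal
  have Eu : ∫ t in (0:ℝ)..1, u t * τ t
      = (∫ t in (0:ℝ)..1, u t * v'' t) + ∫ t in (0:ℝ)..1, u t * v t * (a t + lam) := by
    have hae' : ∀ᵐ t ∂(volume.restrict (Ioc (0:ℝ) 1)),
        u t * τ t = u t * v'' t + u t * v t * (a t + lam) :=
      (ae_Ioc_of_ae_Icc haev).mono (fun t h => by rw [← h]; ring)
    rw [integral_of_le zero_le_one, integral_of_le zero_le_one,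
      integral_of_le zero_le_one,
      ← MeasureTheory.integral_add (ii_iff.mp iuv'') (ii_iff.mp iul)]
    exact MeasureTheory.integral_congr_ae hae'
  have Ev : ∫ t in (0:ℝ)..1, v t * σ t
      = (∫ t in (0:ℝ)..1, v t * u'' t) + ∫ t in (0:ℝ)..1, v t * u t * (a t + lam) := by
    have hae' : ∀ᵐ t ∂(volume.restrict (Ioc (0:ℝ) 1)),
        v t * σ t = v t * u'' t + v t * u t * (a t + lam) :=
      (ae_Ioc_of_ae_Icc haeu).mono (fun t h => by rw [← h]; ring)
    rw [integral_of_le zero_le_one, integral_of_le zero_le_one,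
      integral_of_le zero_le_one,
      ← MeasureTheory.integral_add (ii_iff.mp ivu'') (ii_iff.mp ivl)]
    exact MeasureTheory.integral_congr_ae hae'
  have Ecross : ∫ t in (0:ℝ)..1, u t * v t * (a t + lam)
      = ∫ t in (0:ℝ)..1, v t * u t * (a t + lam) :=
    integral_congr (fun t _ => by ring)
  have W := wronskian Du Dv
  rw [integral_sub iuv'' ivu''] at W
  rw [Eu, Ev, Ecross]
  linarith

lemma eqOn_zero_of_ae_zero {φ : ℝ → ℝ} (hφ : ContinuousOn φ (Icc 0 1))
    (h : φ =ᵐ[volume.restrict (Ioc (0:ℝ) 1)] 0) : ∀ t ∈ Icc (0:ℝ) 1, φ t = 0 := by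
  have h' : φ =ᵐ[volume.restrict (Icc (0:ℝ) 1)] 0 := by
    rwa [restrict_Ioc_eq_restrict_Icc] at h
  have hsub : Icc (0:ℝ) 1 ⊆ closure (interior (Icc (0:ℝ) 1)) := by
    rw [interior_Icc, closure_Ioo (by norm_num : (0:ℝ) ≠ 1)]
  have := Measure.eqOn_of_ae_eq h' hφ continuousOn_const hsub
  exact fun t ht => this ht

lemma zero_of_forall_integral {φ : ℝ → ℝ} (hφ : ContinuousOn φ (Icc 0 1))
    (h : ∀ τ : ℝ → ℝ, IntervalIntegrable τ volume 0 1 →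
      (∫ t in (0:ℝ)..1, φ t * τ t) = 0) :
    ∀ t ∈ Icc (0:ℝ) 1, φ t = 0 := by
  have hφi : IntervalIntegrable φ volume 0 1 := by
    have h2 := hφ
    rw [← uIcc_of_le (zero_le_one' ℝ)] at h2
    exact h2.intervalIntegrable
  have h0 := h φ hφi
  have hfi : IntervalIntegrable (fun t => φ t * φ t) volume 0 1 := contOn_mul_ii hφ hφi
  have hnn : 0 ≤ᵐ[volume.restrict (Ioc (0:ℝ) 1 ∪ Ioc 1 0)] (fun t => φ t * φ t) :=
    ae_of_all _ (fun t => mul_self_nonneg _)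
  have hz := (integral_eq_zero_iff_of_nonneg_ae hnn hfi).mp h0
  have hsimp : Ioc (1:ℝ) 0 = ∅ := Ioc_eq_empty (by norm_num)
  rw [hsimp, union_empty] at hz
  refine eqOn_zero_of_ae_zero hφ (hz.mono (fun t ht => ?_))
  have : φ t * φ t = 0 := ht
  simpa using mul_self_eq_zero.mp this

section Green

variable {a : ℝ → ℝ} {lam : ℝ} {GP : ℝ → ℝ → ℝ}

lemma greenCont (hGP : IsGreenFunction a lam PeriodicBC GP) :
    ContinuousOn (fun p : ℝ × ℝ => GP p.1 p.2) (Icc (0:ℝ) 1 ×ˢ Icc (0:ℝ) 1) := hGP.1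

lemma sliceFst (hGP : IsGreenFunction a lam PeriodicBC GP) {t : ℝ} (ht : t ∈ Icc (0:ℝ) 1) :
    ContinuousOn (fun s => GP t s) (Icc (0:ℝ) 1) := by
  have hmap : ContinuousOn (fun s : ℝ => ((t, s) : ℝ × ℝ)) (Icc 0 1) :=
    (continuous_const.prodMk continuous_id).continuousOn
  exact (greenCont hGP).comp hmap (fun s hs => ⟨ht, hs⟩)

lemma sliceSnd (hGP : IsGreenFunction a lam PeriodicBC GP) {s : ℝ} (hs : s ∈ Icc (0:ℝ) 1) :
    ContinuousOn (fun t => GP t s) (Icc (0:ℝ) 1) := by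
  have hmap : ContinuousOn (fun t : ℝ => ((t, s) : ℝ × ℝ)) (Icc 0 1) :=
    (continuous_id.prodMk continuous_const).continuousOn
  exact (greenCont hGP).comp hmap (fun t ht => ⟨ht, hs⟩)

lemma greenBound (hGP : IsGreenFunction a lam PeriodicBC GP) :
    ∃ C : ℝ, ∀ t ∈ Icc (0:ℝ) 1, ∀ s ∈ Icc (0:ℝ) 1, |GP t s| ≤ C := by
  obtain ⟨C, hC⟩ := (isCompact_Icc.prod isCompact_Icc).exists_bound_of_continuousOn (greenCont hGP)
  exact ⟨C, fun t ht s hs => by simpa [Real.norm_eq_abs] using hC (t, s) ⟨ht, hs⟩⟩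

lemma gsolContOn (hGP : IsGreenFunction a lam PeriodicBC GP) {τ : ℝ → ℝ}
    (hτ : IntervalIntegrable τ volume 0 1) :
    ContinuousOn (fun t => ∫ s in (0:ℝ)..1, GP t s * τ s) (Icc (0:ℝ) 1) := by
  obtain ⟨w', hsol, _⟩ := hGP.2 τ hτ
  exact fun t ht => (hsol.1 t ht).continuousWithinAt

lemma psiContOn (hGP : IsGreenFunction a lam PeriodicBC GP) {τ : ℝ → ℝ}
    (hτ : IntervalIntegrable τ volume 0 1) :
    ContinuousOn (fun x => ∫ t in (0:ℝ)..1, GP t x * τ t) (Icc (0:ℝ) 1) := by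
  have hrw : (fun x => ∫ t in (0:ℝ)..1, GP t x * τ t)
      = fun x => ∫ t in Ioc (0:ℝ) 1, GP t x * τ t :=
    funext fun x => integral_of_le zero_le_one
  rw [hrw]
  obtain ⟨C, hC⟩ := greenBound hGP
  intro x₀ hx₀
  have hτi := ii_iff.mp hτ
  refine continuousWithinAt_of_dominated (bound := fun t => C * ‖τ t‖) ?_ ?_ ?_ ?_
  · filter_upwards [eventually_mem_nhdsWithin] with x hx
    refine AEStronglyMeasurable.mul ?_ hτi.1
    exact ((sliceSnd hGP hx).aestronglyMeasurable measurableSet_Icc).mono_measure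
      (Measure.restrict_mono Ioc_subset_Icc_self le_rfl)
  · filter_upwards [eventually_mem_nhdsWithin] with x hx
    filter_upwards [ae_restrict_mem measurableSet_Ioc] with t htmem
    have : |GP t x| ≤ C := hC t (Ioc_subset_Icc_self htmem) x hx
    rw [Real.norm_eq_abs, abs_mul]
    exact mul_le_mul_of_nonneg_right this (abs_nonneg _) |>.trans
      (le_of_eq (by rw [Real.norm_eq_abs]))
  · exact hτi.norm.const_mul C
  · filter_upwards [ae_restrict_mem measurableSet_Ioc] with t htmem
    exact ((sliceFst hGP (Ioc_subset_Icc_self htmem)) x₀ hx₀).mul continuousWithinAt_const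

lemma green_pair_eq (ha : IntervalIntegrable a volume 0 1)
    (hGP : IsGreenFunction a lam PeriodicBC GP) {σ τ : ℝ → ℝ}
    (hσ : IntervalIntegrable σ volume 0 1) (hτ : IntervalIntegrable τ volume 0 1) :
    ∫ t in (0:ℝ)..1, (∫ s in (0:ℝ)..1, GP t s * σ s) * τ t
      = ∫ t in (0:ℝ)..1, (∫ s in (0:ℝ)..1, GP t s * τ s) * σ t := by
  obtain ⟨uσ', huσ, hbcσ⟩ := hGP.2 σ hσ
  obtain ⟨uτ', huτ, hbcτ⟩ := hGP.2 τ hτ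
  have P := pairing ha huσ huτ hτ hσ
  obtain ⟨e1, e2⟩ := hbcσ
  obtain ⟨e3, e4⟩ := hbcτ
  have e1' : (∫ s in (0:ℝ)..1, GP 0 s * σ s) = ∫ s in (0:ℝ)..1, GP 1 s * σ s := e1
  have e3' : (∫ s in (0:ℝ)..1, GP 0 s * τ s) = ∫ s in (0:ℝ)..1, GP 1 s * τ s := e3
  rw [← e1', ← e2, ← e3', ← e4] at P
  linarith

lemma green_fubini (hGP : IsGreenFunction a lam PeriodicBC GP) {σ τ : ℝ → ℝ}
    (hσ : IntervalIntegrable σ volume 0 1) (hτ : IntervalIntegrable τ volume 0 1) :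
    ∫ t in (0:ℝ)..1, (∫ s in (0:ℝ)..1, GP t s * σ s) * τ t
      = ∫ s in (0:ℝ)..1, (∫ t in (0:ℝ)..1, GP t s * τ t) * σ s := by
  obtain ⟨C, hC⟩ := greenBound hGP
  have hGm : AEStronglyMeasurable (fun p : ℝ × ℝ => GP p.1 p.2)
      ((volume.restrict (Ioc (0:ℝ) 1)).prod (volume.restrict (Ioc (0:ℝ) 1))) := by
    rw [Measure.prod_restrict]
    refine AEStronglyMeasurable.mono_measure ?_
      (Measure.restrict_mono (prod_mono Ioc_subset_Icc_self Ioc_subset_Icc_self) le_rfl)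
    exact (greenCont hGP).aestronglyMeasurable (measurableSet_Icc.prod measurableSet_Icc)
  have haeprod : ∀ᵐ p : ℝ × ℝ
      ∂((volume.restrict (Ioc (0:ℝ) 1)).prod (volume.restrict (Ioc (0:ℝ) 1))),
      p ∈ Ioc (0:ℝ) 1 ×ˢ Ioc (0:ℝ) 1 := by
    rw [Measure.prod_restrict]
    exact ae_restrict_mem (measurableSet_Ioc.prod measurableSet_Ioc)
  have hbase : Integrable (fun p : ℝ × ℝ => τ p.1 * σ p.2)
      ((volume.restrict (Ioc (0:ℝ) 1)).prod (volume.restrict (Ioc (0:ℝ) 1))) :=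
    (ii_iff.mp hτ).mul_prod (ii_iff.mp hσ)
  have hInt : Integrable (fun p : ℝ × ℝ => GP p.1 p.2 * σ p.2 * τ p.1)
      ((volume.restrict (Ioc (0:ℝ) 1)).prod (volume.restrict (Ioc (0:ℝ) 1))) := by
    have h1 : Integrable (fun p : ℝ × ℝ => GP p.1 p.2 * (τ p.1 * σ p.2))
        ((volume.restrict (Ioc (0:ℝ) 1)).prod (volume.restrict (Ioc (0:ℝ) 1))) := by
      refine hbase.bdd_mul (c := C) hGm ?_
      filter_upwards [haeprod] with p hp
      rw [Real.norm_eq_abs]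
      exact hC p.1 (Ioc_subset_Icc_self hp.1) p.2 (Ioc_subset_Icc_self hp.2)
    exact h1.congr (ae_of_all _ (fun p => by ring))
  have L1 : ∫ t in Ioc (0:ℝ) 1, (∫ s in (0:ℝ)..1, GP t s * σ s) * τ t
      = ∫ t in Ioc (0:ℝ) 1, ∫ s in Ioc (0:ℝ) 1, GP t s * σ s * τ t := by
    refine setIntegral_congr_fun measurableSet_Ioc (fun t ht => ?_)
    rw [integral_of_le zero_le_one, ← MeasureTheory.integral_mul_const]
  have L2 : ∫ t in Ioc (0:ℝ) 1, ∫ s in Ioc (0:ℝ) 1, GP t s * σ s * τ t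
      = ∫ s in Ioc (0:ℝ) 1, ∫ t in Ioc (0:ℝ) 1, GP t s * σ s * τ t :=
    integral_integral_swap hInt
  have L3 : ∫ s in Ioc (0:ℝ) 1, ∫ t in Ioc (0:ℝ) 1, GP t s * σ s * τ t
      = ∫ s in Ioc (0:ℝ) 1, (∫ t in (0:ℝ)..1, GP t s * τ t) * σ s := by
    refine setIntegral_congr_fun measurableSet_Ioc (fun s hs => ?_)
    rw [integral_of_le zero_le_one, ← MeasureTheory.integral_mul_const]
    refine setIntegral_congr_fun measurableSet_Ioc (fun t ht => ?_)
    ring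
  rw [integral_of_le zero_le_one, integral_of_le zero_le_one, L1, L2, L3]

lemma green_symm (ha : IntervalIntegrable a volume 0 1)
    (hGP : IsGreenFunction a lam PeriodicBC GP) :
    ∀ t ∈ Icc (0:ℝ) 1, ∀ s ∈ Icc (0:ℝ) 1, GP t s = GP s t := by
  have main : ∀ τ : ℝ → ℝ, IntervalIntegrable τ volume 0 1 → ∀ x ∈ Icc (0:ℝ) 1,
      (∫ s in (0:ℝ)..1, GP x s * τ s) = ∫ t in (0:ℝ)..1, GP t x * τ t := by
    intro τ hτ
    have hcont : ContinuousOn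
        (fun x => (∫ s in (0:ℝ)..1, GP x s * τ s) - ∫ t in (0:ℝ)..1, GP t x * τ t)
        (Icc (0:ℝ) 1) := (gsolContOn hGP hτ).sub (psiContOn hGP hτ)
    have hzero := zero_of_forall_integral hcont ?_
    · intro x hx
      have := hzero x hx
      linarith
    · intro σ hσ
      have i1 : IntervalIntegrable (fun x => (∫ s in (0:ℝ)..1, GP x s * τ s) * σ x)
          volume 0 1 := contOn_mul_ii (gsolContOn hGP hτ) hσ
      have i2 : IntervalIntegrable (fun x => (∫ t in (0:ℝ)..1, GP t x * τ t) * σ x)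
          volume 0 1 := contOn_mul_ii (psiContOn hGP hτ) hσ
      have e0 : ∫ x in (0:ℝ)..1,
          ((∫ s in (0:ℝ)..1, GP x s * τ s) - ∫ t in (0:ℝ)..1, GP t x * τ t) * σ x
          = (∫ x in (0:ℝ)..1, (∫ s in (0:ℝ)..1, GP x s * τ s) * σ x)
            - ∫ x in (0:ℝ)..1, (∫ t in (0:ℝ)..1, GP t x * τ t) * σ x := by
        rw [← integral_sub i1 i2]
        exact integral_congr (fun x _ => by ring)
      rw [e0, green_pair_eq ha hGP hτ hσ, green_fubini hGP hσ hτ]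
      ring
  intro t ht s hs
  have hcont2 : ContinuousOn (fun s => GP t s - GP s t) (Icc (0:ℝ) 1) :=
    (sliceFst hGP ht).sub (sliceSnd hGP ht)
  have hzero2 := zero_of_forall_integral hcont2 ?_
  · have := hzero2 s hs
    linarith
  · intro τ hτ
    have i1 : IntervalIntegrable (fun s => GP t s * τ s) volume 0 1 :=
      contOn_mul_ii (sliceFst hGP ht) hτ
    have i2 : IntervalIntegrable (fun s => GP s t * τ s) volume 0 1 :=
      contOn_mul_ii (sliceSnd hGP ht) hτ
    have e0 : ∫ x in (0:ℝ)..1, (GP t x - GP x t) * τ x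
        = (∫ x in (0:ℝ)..1, GP t x * τ x) - ∫ x in (0:ℝ)..1, GP x t * τ x := by
      rw [← integral_sub i1 i2]
      exact integral_congr (fun x _ => by ring)
    rw [e0, main τ hτ t ht]
    ring

lemma hom_rep (ha : IntervalIntegrable a volume 0 1)
    (hGP : IsGreenFunction a lam PeriodicBC GP) {h h' : ℝ → ℝ}
    (hsol : IsW21Solution a lam (fun _ => 0) h h') (hbc : h 0 = h 1) :
    ∀ t ∈ Icc (0:ℝ) 1, h t = (h' 0 - h' 1) * GP 0 t := by
  have h0m : (0:ℝ) ∈ Icc (0:ℝ) 1 := by norm_num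
  have hhc : ContinuousOn h (Icc (0:ℝ) 1) := fun t ht => (hsol.1 t ht).continuousWithinAt
  have hφc : ContinuousOn (fun t => h t - (h' 0 - h' 1) * GP 0 t) (Icc (0:ℝ) 1) :=
    hhc.sub (((sliceFst hGP h0m)).const_smul (h' 0 - h' 1) |>.congr (fun t _ => by simp [smul_eq_mul]))
  have hzero := zero_of_forall_integral hφc ?_
  · intro t ht
    have := hzero t ht
    linarith
  · intro τ hτ
    obtain ⟨w', hwsol, hwbc⟩ := hGP.2 τ hτ
    have P := pairing ha hsol hwsol hτ intervalIntegrable_const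
    have hz0 : ∫ t in (0:ℝ)..1, (∫ s in (0:ℝ)..1, GP t s * τ s) * 0 = (0:ℝ) := by simp
    rw [hz0] at P
    obtain ⟨e1, e2⟩ := hwbc
    have i1 : IntervalIntegrable (fun t => h t * τ t) volume 0 1 := contOn_mul_ii hhc hτ
    have i2 : IntervalIntegrable (fun t => GP 0 t * τ t) volume 0 1 :=
      contOn_mul_ii (sliceFst hGP h0m) hτ
    have e0 : ∫ t in (0:ℝ)..1, (h t - (h' 0 - h' 1) * GP 0 t) * τ t
        = (∫ t in (0:ℝ)..1, h t * τ t)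
          - (h' 0 - h' 1) * ∫ t in (0:ℝ)..1, GP 0 t * τ t := by
      rw [← intervalIntegral.integral_const_mul, ← integral_sub i1 (i2.const_mul _)]
      exact integral_congr (fun t _ => by ring)
    rw [e0]
    have e1' : (∫ s in (0:ℝ)..1, GP 0 s * τ s) = ∫ s in (0:ℝ)..1, GP 1 s * τ s := e1
    rw [← e1', ← e2, hbc] at P
    linarith

end Green

lemma sub_sol {a : ℝ → ℝ} {lam : ℝ} {σ1 σ2 u u' v v' : ℝ → ℝ}
    (h1 : IsW21Solution a lam σ1 u u') (h2 : IsW21Solution a lam σ2 v v') :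
    IsW21Solution a lam (fun t => σ1 t - σ2 t)
      (fun t => u t - v t) (fun t => u' t - v' t) := by
  obtain ⟨hd1, u'', hi1, hrep1, hae1⟩ := h1
  obtain ⟨hd2, v'', hi2, hrep2, hae2⟩ := h2
  refine ⟨fun t ht => (hd1 t ht).sub (hd2 t ht),
    fun t => u'' t - v'' t, hi1.sub hi2, ?_, ?_⟩
  · intro t ht
    have ht' : t ∈ Icc (0:ℝ) 1 := ht
    have hsub : uIcc (0:ℝ) t ⊆ uIcc (0:ℝ) 1 := by
      rw [uIcc_of_le ht'.1, uIcc_of_le (zero_le_one' ℝ)]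
      exact Icc_subset_Icc le_rfl ht'.2
    have m1 : IntervalIntegrable u'' volume 0 t := hi1.mono_set hsub
    have m2 : IntervalIntegrable v'' volume 0 t := hi2.mono_set hsub
    have e1 := hrep1 t ht
    have e2 := hrep2 t ht
    show u' t - v' t = (u' 0 - v' 0) + ∫ s in (0:ℝ)..t, (u'' s - v'' s)
    rw [integral_sub m1 m2]
    linarith
  · filter_upwards [hae1, hae2] with t e1 e2
    show (u'' t - v'' t) + (a t + lam) * (u t - v t) = σ1 t - σ2 t
    linear_combination e1 - e2

lemma sol_congr {a : ℝ → ℝ} {lam : ℝ} {σ1 σ2 u u' : ℝ → ℝ}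
    (h1 : IsW21Solution a lam σ1 u u') (h : ∀ t, σ1 t = σ2 t) :
    IsW21Solution a lam σ2 u u' := by
  obtain ⟨hd1, u'', hi1, hrep1, hae1⟩ := h1
  exact ⟨hd1, u'', hi1, hrep1, hae1.mono (fun t e => by rw [← h t]; exact e)⟩

end Stmt18Aux

open intervalIntegral Stmt18Aux

/-- comparison of the solutions of the nonlinear Dirichlet and
Periodic problems: `‖u_D − u_P‖_∞ ≤ (K₂‖u_D‖_∞ + K₃)/(1 − K₁)`. -/
theorem stmt18 (a : ℝ → ℝ) (ha : IntervalIntegrable a volume 0 1) (lam : ℝ)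
    (f : ℝ → ℝ → ℝ) (K : ℝ → ℝ)
    (hKint : IntervalIntegrable K volume 0 1) (hKnonneg : ∀ t, 0 ≤ K t)
    (hLip : ∀ᵐ t ∂(volume.restrict unitI),
      ∀ x y : ℝ, |f t x - f t y| ≤ K t * |x - y|)
    (hf0 : IntervalIntegrable (fun t => f t 0) volume 0 1)
    (hND : Nonresonant a lam DirichletBC) (hNP : Nonresonant a lam PeriodicBC)
    (GP : ℝ → ℝ → ℝ) (hGP : IsGreenFunction a lam PeriodicBC GP)
    (hne : GP 1 0 ≠ 0)
    (uD uD' uP uP' : ℝ → ℝ)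
    (hsolD : IsW21Solution a lam (fun t => f t (uD t)) uD uD')
    (hbcD : uD 0 = 0 ∧ uD 1 = 0)
    (hsolP : IsW21Solution a lam (fun t => f t (uP t)) uP uP')
    (hbcP : uP 0 = uP 1 ∧ uP' 0 = uP' 1)
    (K1 K2 K3 nuD : ℝ)
    (hK1 : IsGreatest ((fun t => ∫ s in (0:ℝ)..1, |GP t s| * K s) '' unitI) K1)
    (hK2 : IsGreatest
      ((fun t => |GP t 0 / GP 1 0| * ∫ s in (0:ℝ)..1, |GP 1 s| * K s) '' unitI) K2)
    (hK3 : IsGreatest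
      ((fun t => |GP t 0 / GP 1 0| * ∫ s in (0:ℝ)..1, |GP 1 s * f s 0|) '' unitI) K3)
    (hnuD : IsGreatest ((fun t => |uD t|) '' unitI) nuD)
    (hK1lt : K1 < 1) :
    ∀ t ∈ unitI, |uD t - uP t| ≤ (K2 * nuD + K3) / (1 - K1) := by
  have h01 : (0:ℝ) ∈ Icc (0:ℝ) 1 := by norm_num
  have h11 : (1:ℝ) ∈ Icc (0:ℝ) 1 := by norm_num
  obtain ⟨uD'', DD, haeD⟩ := solData_of_IsW21 hsolD
  obtain ⟨uP'', DP, haeP⟩ := solData_of_IsW21 hsolP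
  have hal : IntervalIntegrable (fun t => a t + lam) volume 0 1 :=
    ha.add intervalIntegrable_const
  have integτ : ∀ u u'' : ℝ → ℝ, ContinuousOn u (Icc 0 1) →
      IntervalIntegrable u'' volume 0 1 →
      (∀ᵐ t ∂(volume.restrict (Icc (0:ℝ) 1)), u'' t + (a t + lam) * u t = f t (u t)) →
      IntervalIntegrable (fun t => f t (u t)) volume 0 1 := by
    intro u u'' hc hi hae
    rw [ii_iff]
    have h2 : IntervalIntegrable (fun t => u t * (a t + lam)) volume 0 1 :=
      contOn_mul_ii hc hal
    have h3 : IntegrableOn (fun t => u'' t + (a t + lam) * u t) (Ioc 0 1) volume := by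
      refine (ii_iff.mp hi).add ?_
      exact (ii_iff.mp h2).congr (ae_of_all _ (fun t => mul_comm _ _))
    exact h3.congr (ae_Ioc_of_ae_Icc hae)
  have iτD : IntervalIntegrable (fun t => f t (uD t)) volume 0 1 :=
    integτ uD uD'' DD.contU DD.hi haeD
  have iτP : IntervalIntegrable (fun t => f t (uP t)) volume 0 1 :=
    integτ uP uP'' DP.contU DP.hi haeP
  obtain ⟨z', hzsol, hzbc⟩ := hGP.2 (fun t => f t (uD t)) iτD
  obtain ⟨zP', hzPsol, hzPbc⟩ := hGP.2 (fun t => f t (uP t)) iτP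
  have hDhom : IsW21Solution a lam (fun _ => (0:ℝ))
      (fun t => uD t - ∫ s in (0:ℝ)..1, GP t s * f s (uD s))
      (fun t => uD' t - z' t) :=
    sol_congr (sub_sol hsolD hzsol) (fun t => sub_self _)
  have hPhom : IsW21Solution a lam (fun _ => (0:ℝ))
      (fun t => uP t - ∫ s in (0:ℝ)..1, GP t s * f s (uP s))
      (fun t => uP' t - zP' t) :=
    sol_congr (sub_sol hsolP hzPsol) (fun t => sub_self _)
  have hz01 : (∫ s in (0:ℝ)..1, GP 0 s * f s (uD s))
      = ∫ s in (0:ℝ)..1, GP 1 s * f s (uD s) := hzbc.1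
  have hzP01 : (∫ s in (0:ℝ)..1, GP 0 s * f s (uP s))
      = ∫ s in (0:ℝ)..1, GP 1 s * f s (uP s) := hzPbc.1
  have bcD : (fun t => uD t - ∫ s in (0:ℝ)..1, GP t s * f s (uD s)) 0
      = (fun t => uD t - ∫ s in (0:ℝ)..1, GP t s * f s (uD s)) 1 := by
    simp only
    rw [hbcD.1, hbcD.2, hz01]
  have bcP : (fun t => uP t - ∫ s in (0:ℝ)..1, GP t s * f s (uP s)) 0
      = (fun t => uP t - ∫ s in (0:ℝ)..1, GP t s * f s (uP s)) 1 := by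
    simp only
    rw [hbcP.1, hzP01]
  have repD := hom_rep ha hGP hDhom bcD
  have repP := hom_rep ha hGP hPhom bcP
  have hdP : ((uP' 0 - zP' 0) - (uP' 1 - zP' 1)) = 0 := by
    have e2 : zP' 0 = zP' 1 := hzPbc.2
    have e3 : uP' 0 = uP' 1 := hbcP.2
    linarith
  have hPz : ∀ t ∈ Icc (0:ℝ) 1, uP t = ∫ s in (0:ℝ)..1, GP t s * f s (uP s) := by
    intro t ht
    have h' : uP t - (∫ s in (0:ℝ)..1, GP t s * f s (uP s))
        = ((uP' 0 - zP' 0) - (uP' 1 - zP' 1)) * GP 0 t := repP t ht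
    rw [hdP, zero_mul] at h'
    linarith
  set c := (uD' 0 - z' 0) - (uD' 1 - z' 1) with hcdef
  have repD' : ∀ t ∈ Icc (0:ℝ) 1,
      uD t - (∫ s in (0:ℝ)..1, GP t s * f s (uD s)) = c * GP 0 t :=
    fun t ht => repD t ht
  have hsymm := green_symm ha hGP
  have GP01 : GP 0 1 = GP 1 0 := hsymm 0 h01 1 h11
  have hzc : -(∫ s in (0:ℝ)..1, GP 1 s * f s (uD s)) = c * GP 1 0 := by
    have h := repD' 1 h11
    rw [hbcD.2, GP01] at h
    linarith
  obtain ⟨t₀, ht₀, hmax⟩ := isCompact_Icc.exists_isMaxOn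
    (Set.nonempty_Icc.mpr zero_le_one) ((DD.contU.sub DP.contU).abs)
  set M := |uD t₀ - uP t₀| with hMdef
  have hM : ∀ t ∈ Icc (0:ℝ) 1, |uD t - uP t| ≤ M := fun t ht => hmax ht
  have hM0 : 0 ≤ M := abs_nonneg _
  have hnuD0 : 0 ≤ nuD := by
    obtain ⟨t1, _, ht1⟩ := hnuD.1
    rw [← ht1]
    exact abs_nonneg _
  have hnuDub : ∀ t ∈ Icc (0:ℝ) 1, |uD t| ≤ nuD :=
    fun t ht => hnuD.2 (Set.mem_image_of_mem _ ht)
  have hLipIoc : ∀ᵐ t ∂(volume.restrict (Ioc (0:ℝ) 1)),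
      ∀ x y : ℝ, |f t x - f t y| ≤ K t * |x - y| := ae_Ioc_of_ae_Icc hLip
  have hz1b : |∫ s in (0:ℝ)..1, GP 1 s * f s (uD s)|
      ≤ (∫ s in (0:ℝ)..1, |GP 1 s| * K s) * nuD
        + ∫ s in (0:ℝ)..1, |GP 1 s * f s 0| := by
    have i1 : IntervalIntegrable (fun s => |GP 1 s * f s (uD s)|) volume 0 1 :=
      (contOn_mul_ii (sliceFst hGP h11) iτD).abs
    have i2a : IntervalIntegrable (fun s => |GP 1 s| * K s * nuD) volume 0 1 :=
      (contOn_mul_ii ((sliceFst hGP h11).abs) hKint).mul_const nuD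
    have i2b : IntervalIntegrable (fun s => |GP 1 s * f s 0|) volume 0 1 :=
      (contOn_mul_ii (sliceFst hGP h11) hf0).abs
    have step2 : (∫ s in (0:ℝ)..1, |GP 1 s * f s (uD s)|)
        ≤ ∫ s in (0:ℝ)..1, (|GP 1 s| * K s * nuD + |GP 1 s * f s 0|) := by
      rw [integral_of_le zero_le_one, integral_of_le zero_le_one]
      refine MeasureTheory.integral_mono_ae (ii_iff.mp i1) (ii_iff.mp (i2a.add i2b)) ?_
      filter_upwards [hLipIoc, ae_restrict_mem measurableSet_Ioc] with s hLs hsm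
      have hDs : |uD s| ≤ nuD := hnuDub s (Ioc_subset_Icc_self hsm)
      have h1 : |f s (uD s) - f s 0| ≤ K s * |uD s - 0| := hLs (uD s) 0
      rw [sub_zero] at h1
      have h2 : |f s (uD s)| ≤ K s * |uD s| + |f s 0| := by
        have e : f s (uD s) - f s 0 + f s 0 = f s (uD s) := by ring
        calc |f s (uD s)| = |f s (uD s) - f s 0 + f s 0| := by rw [e]
          _ ≤ |f s (uD s) - f s 0| + |f s 0| := abs_add_le _ _
          _ ≤ K s * |uD s| + |f s 0| := by linarith
      calc |GP 1 s * f s (uD s)| = |GP 1 s| * |f s (uD s)| := abs_mul _ _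
        _ ≤ |GP 1 s| * (K s * |uD s| + |f s 0|) :=
            mul_le_mul_of_nonneg_left h2 (abs_nonneg _)
        _ ≤ |GP 1 s| * (K s * nuD + |f s 0|) := by
            have e1 : K s * |uD s| ≤ K s * nuD :=
              mul_le_mul_of_nonneg_left hDs (hKnonneg s)
            exact mul_le_mul_of_nonneg_left (by linarith) (abs_nonneg _)
        _ = |GP 1 s| * K s * nuD + |GP 1 s * f s 0| := by rw [abs_mul]; ring
    have step3 : ∫ s in (0:ℝ)..1, (|GP 1 s| * K s * nuD + |GP 1 s * f s 0|)
        = (∫ s in (0:ℝ)..1, |GP 1 s| * K s) * nuD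
          + ∫ s in (0:ℝ)..1, |GP 1 s * f s 0| := by
      rw [integral_add i2a i2b, intervalIntegral.integral_mul_const]
    calc |∫ s in (0:ℝ)..1, GP 1 s * f s (uD s)|
        ≤ ∫ s in (0:ℝ)..1, |GP 1 s * f s (uD s)| :=
          abs_integral_le_integral_abs zero_le_one
      _ ≤ _ := by rw [← step3]; exact step2
  have key : ∀ t ∈ Icc (0:ℝ) 1, |uD t - uP t| ≤ K1 * M + (K2 * nuD + K3) := by
    intro t ht
    have htm : t ∈ unitI := ht
    have iGtD : IntervalIntegrable (fun s => GP t s * f s (uD s)) volume 0 1 :=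
      contOn_mul_ii (sliceFst hGP ht) iτD
    have iGtP : IntervalIntegrable (fun s => GP t s * f s (uP s)) volume 0 1 :=
      contOn_mul_ii (sliceFst hGP ht) iτP
    have zdiff : (∫ s in (0:ℝ)..1, GP t s * f s (uD s))
        - (∫ s in (0:ℝ)..1, GP t s * f s (uP s))
        = ∫ s in (0:ℝ)..1, (GP t s * f s (uD s) - GP t s * f s (uP s)) :=
      (integral_sub iGtD iGtP).symm
    have formula : uD t - uP t
        = (∫ s in (0:ℝ)..1, (GP t s * f s (uD s) - GP t s * f s (uP s)))
          + c * GP 0 t := by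
      have h1 := repD' t ht
      have h2 := hPz t ht
      rw [← zdiff]
      linarith
    have i3 : IntervalIntegrable
        (fun s => |GP t s * f s (uD s) - GP t s * f s (uP s)|) volume 0 1 :=
      (iGtD.sub iGtP).abs
    have i4 : IntervalIntegrable (fun s => |GP t s| * K s * M) volume 0 1 :=
      (contOn_mul_ii ((sliceFst hGP ht).abs) hKint).mul_const M
    have T1 : |∫ s in (0:ℝ)..1, (GP t s * f s (uD s) - GP t s * f s (uP s))|
        ≤ K1 * M := by
      have s2 : (∫ s in (0:ℝ)..1, |GP t s * f s (uD s) - GP t s * f s (uP s)|)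
          ≤ ∫ s in (0:ℝ)..1, |GP t s| * K s * M := by
        rw [integral_of_le zero_le_one, integral_of_le zero_le_one]
        refine MeasureTheory.integral_mono_ae (ii_iff.mp i3) (ii_iff.mp i4) ?_
        filter_upwards [hLipIoc, ae_restrict_mem measurableSet_Ioc] with s hLs hsm
        have hws : |uD s - uP s| ≤ M := hM s (Ioc_subset_Icc_self hsm)
        calc |GP t s * f s (uD s) - GP t s * f s (uP s)|
            = |GP t s| * |f s (uD s) - f s (uP s)| := by rw [← mul_sub, abs_mul]
          _ ≤ |GP t s| * (K s * |uD s - uP s|) :=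
              mul_le_mul_of_nonneg_left (hLs _ _) (abs_nonneg _)
          _ ≤ |GP t s| * (K s * M) :=
              mul_le_mul_of_nonneg_left
                (mul_le_mul_of_nonneg_left hws (hKnonneg s)) (abs_nonneg _)
          _ = |GP t s| * K s * M := by ring
      have s3 : (∫ s in (0:ℝ)..1, |GP t s| * K s * M)
          = (∫ s in (0:ℝ)..1, |GP t s| * K s) * M := by
        rw [← intervalIntegral.integral_mul_const]
      have s4 : (∫ s in (0:ℝ)..1, |GP t s| * K s) ≤ K1 :=
        hK1.2 (Set.mem_image_of_mem _ htm)
      calc |∫ s in (0:ℝ)..1, (GP t s * f s (uD s) - GP t s * f s (uP s))|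
          ≤ ∫ s in (0:ℝ)..1, |GP t s * f s (uD s) - GP t s * f s (uP s)| :=
            abs_integral_le_integral_abs zero_le_one
        _ ≤ (∫ s in (0:ℝ)..1, |GP t s| * K s) * M := by rw [← s3]; exact s2
        _ ≤ K1 * M := mul_le_mul_of_nonneg_right s4 hM0
    have hGP0t : GP 0 t = GP t 0 := hsymm 0 h01 t ht
    have hcval : c = -(∫ s in (0:ℝ)..1, GP 1 s * f s (uD s)) / GP 1 0 :=
      (eq_div_iff hne).mpr hzc.symm
    have T2 : |c * GP 0 t| ≤ K2 * nuD + K3 := by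
      have e : c * GP 0 t
          = -(GP t 0 / GP 1 0 * (∫ s in (0:ℝ)..1, GP 1 s * f s (uD s))) := by
        rw [hGP0t, hcval]; ring
      rw [e, abs_neg, abs_mul]
      have b1 : |GP t 0 / GP 1 0| * |∫ s in (0:ℝ)..1, GP 1 s * f s (uD s)|
          ≤ |GP t 0 / GP 1 0| * ((∫ s in (0:ℝ)..1, |GP 1 s| * K s) * nuD
            + ∫ s in (0:ℝ)..1, |GP 1 s * f s 0|) :=
        mul_le_mul_of_nonneg_left hz1b (abs_nonneg _)
      have b2 : |GP t 0 / GP 1 0| * (∫ s in (0:ℝ)..1, |GP 1 s| * K s) ≤ K2 :=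
        hK2.2 (Set.mem_image_of_mem _ htm)
      have b3 : |GP t 0 / GP 1 0| * (∫ s in (0:ℝ)..1, |GP 1 s * f s 0|) ≤ K3 :=
        hK3.2 (Set.mem_image_of_mem _ htm)
      have b4 : (|GP t 0 / GP 1 0| * (∫ s in (0:ℝ)..1, |GP 1 s| * K s)) * nuD
          ≤ K2 * nuD := mul_le_mul_of_nonneg_right b2 hnuD0
      have e5 : |GP t 0 / GP 1 0| * ((∫ s in (0:ℝ)..1, |GP 1 s| * K s) * nuD
            + ∫ s in (0:ℝ)..1, |GP 1 s * f s 0|)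
          = (|GP t 0 / GP 1 0| * (∫ s in (0:ℝ)..1, |GP 1 s| * K s)) * nuD
            + |GP t 0 / GP 1 0| * (∫ s in (0:ℝ)..1, |GP 1 s * f s 0|) := by ring
      linarith
    calc |uD t - uP t|
        = |(∫ s in (0:ℝ)..1, (GP t s * f s (uD s) - GP t s * f s (uP s)))
            + c * GP 0 t| := by rw [formula]
      _ ≤ |∫ s in (0:ℝ)..1, (GP t s * f s (uD s) - GP t s * f s (uP s))|
            + |c * GP 0 t| := abs_add_le _ _
      _ ≤ K1 * M + (K2 * nuD + K3) := add_le_add T1 T2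
  have hMle := key t₀ ht₀
  have h1K : (0:ℝ) < 1 - K1 := by linarith
  have hMb : M ≤ (K2 * nuD + K3) / (1 - K1) := by
    rw [le_div_iff₀ h1K]
    nlinarith [hMle]
  intro t ht
  exact le_trans (hM t ht) hMb
end
end

section
/- Let f : I × ℝ → ℝ be an L¹-Carathéodory function satisfying the Lipschitz condition (H₂). Suppose L[λ] is nonresonant for the Dirichlet boundary conditions with Green's function G_D[λ], and assume P_D := max_{t∈I} ∫₀¹ |G_D[λ](t,s)| K(s) ds < 1. Then there exists a continuous function u : I → ℝ with u(t) = ∫₀¹ G_D[λ](t,s) f(s,u(s)) ds for all t ∈ I; in particular, the nonlinear Dirichlet problem u''(t)+(a(t)+λ)u(t) = f(t,u(t)) a.e. on I, u(0)=u(1)=0 has at least one solution u ∈ W^{2,1}(I). -/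
open MeasureTheory Set

noncomputable section

open Filter Topology in

lemma aux_aemeas (f : ℝ → ℝ → ℝ)
    (hmeas : ∀ x : ℝ, Measurable (fun t => f t x))
    (hcont : ∀ᵐ t ∂(volume.restrict unitI), Continuous (fun x => f t x))
    (g : ℝ → ℝ) (hg : Measurable g) :
    AEMeasurable (fun t => f t (g t)) (volume.restrict unitI) := by
  set c : ℕ → ℝ → ℝ := fun n t => ((⌈((n:ℝ)+1) * g t⌉ : ℤ) : ℝ)/((n:ℝ)+1) with hc
  have hcm : ∀ n : ℕ, Measurable fun t => f t (c n t) := by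
    intro n
    have hF : Measurable (fun p : ℝ × ℤ => f p.1 ((p.2 : ℝ)/((n:ℝ)+1))) :=
      measurable_from_prod_countable_left fun k => hmeas ((k:ℝ)/((n:ℝ)+1))
    exact hF.comp (measurable_id.prodMk ((measurable_const.mul hg).ceil))
  refine aemeasurable_of_tendsto_metrizable_ae atTop (fun n => (hcm n).aemeasurable) ?_
  filter_upwards [hcont] with t ht
  have hlim : Tendsto (fun n : ℕ => c n t) atTop (𝓝 (g t)) := by
    rw [tendsto_iff_dist_tendsto_zero]
    have h1 : ∀ n : ℕ, dist (c n t) (g t) ≤ 1/((n:ℝ)+1) := by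
      intro n
      have hn : (0:ℝ) < (n:ℝ)+1 := by positivity
      have h2 : ((n:ℝ)+1) * g t ≤ (⌈((n:ℝ)+1) * g t⌉ : ℝ) := Int.le_ceil _
      have h3 : ((⌈((n:ℝ)+1) * g t⌉ : ℤ) : ℝ) < ((n:ℝ)+1) * g t + 1 := Int.ceil_lt_add_one _
      have heq : c n t - g t = (((⌈((n:ℝ)+1) * g t⌉ : ℤ) : ℝ) - ((n:ℝ)+1) * g t)/((n:ℝ)+1) := by
        rw [hc]; field_simp
      rw [Real.dist_eq, heq, abs_div, abs_of_pos hn]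
      gcongr
      rw [abs_le]
      constructor <;> linarith
    exact squeeze_zero (fun n => dist_nonneg) h1 tendsto_one_div_add_atTop_nhds_zero_nat
  exact (ht.tendsto (g t)).comp hlim

lemma aux_int (f : ℝ → ℝ → ℝ)
    (hmeas : ∀ x : ℝ, Measurable (fun t => f t x))
    (hcont : ∀ᵐ t ∂(volume.restrict unitI), Continuous (fun x => f t x))
    (hbound : ∀ R : ℝ, 0 < R → ∃ φ : ℝ → ℝ,
      IntervalIntegrable φ volume 0 1 ∧
      ∀ᵐ t ∂(volume.restrict unitI), ∀ x : ℝ, |x| ≤ R → |f t x| ≤ φ t)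
    (K : ℝ → ℝ) (hKint : IntervalIntegrable K volume 0 1) (hKnonneg : ∀ t, 0 ≤ K t)
    (hLip : ∀ᵐ t ∂(volume.restrict unitI),
      ∀ x y : ℝ, |f t x - f t y| ≤ K t * |x - y|)
    (g : ℝ → ℝ) (hg : Measurable g) (C : ℝ) (hgC : ∀ s, |g s| ≤ C) :
    IntervalIntegrable (fun s => f s (g s)) volume 0 1 := by
  obtain ⟨φ, hφint, hφ⟩ := hbound 1 one_pos
  have haem := aux_aemeas f hmeas hcont g hg
  have hsub : Ioc (0:ℝ) 1 ⊆ unitI := Ioc_subset_Icc_self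
  have hmono : volume.restrict (Ioc (0:ℝ) 1) ≤ volume.restrict unitI :=
    Measure.restrict_mono hsub le_rfl
  rw [intervalIntegrable_iff_integrableOn_Ioc_of_le zero_le_one] at hφint hKint ⊢
  refine Integrable.mono' (hφint.add (hKint.mul_const C))
    (haem.mono_measure hmono).aestronglyMeasurable ?_
  have hLip' := ae_restrict_of_ae_restrict_of_subset hsub hLip
  have hφ' := ae_restrict_of_ae_restrict_of_subset hsub hφ
  filter_upwards [hLip', hφ'] with s h1 h2
  have h3 : |f s (g s)| ≤ |f s (g s) - f s 0| + |f s 0| := by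
    have := abs_sub_abs_le_abs_sub (f s (g s)) (f s 0)
    linarith [abs_nonneg (f s 0)]
  have h4 : |f s (g s) - f s 0| ≤ K s * |g s| := by simpa using h1 (g s) 0
  have h5 : |f s 0| ≤ φ s := h2 0 (by norm_num)
  have h6 : K s * |g s| ≤ K s * C := mul_le_mul_of_nonneg_left (hgC s) (hKnonneg s)
  calc ‖f s (g s)‖ = |f s (g s)| := rfl
    _ ≤ φ s + K s * C := by linarith

/-- existence of a solution of the nonlinear Dirichlet problem. -/
theorem stmt19 (a : ℝ → ℝ) (ha : IntervalIntegrable a volume 0 1) (lam : ℝ)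
    (f : ℝ → ℝ → ℝ)
    -- f is L¹-Carathéodory:
    (hmeas : ∀ x : ℝ, Measurable (fun t => f t x))
    (hcont : ∀ᵐ t ∂(volume.restrict unitI), Continuous (fun x => f t x))
    (hbound : ∀ R : ℝ, 0 < R → ∃ φ : ℝ → ℝ,
      IntervalIntegrable φ volume 0 1 ∧
      ∀ᵐ t ∂(volume.restrict unitI), ∀ x : ℝ, |x| ≤ R → |f t x| ≤ φ t)
    -- Lipschitz condition (H₂):
    (K : ℝ → ℝ) (hKint : IntervalIntegrable K volume 0 1) (hKnonneg : ∀ t, 0 ≤ K t)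
    (hLip : ∀ᵐ t ∂(volume.restrict unitI),
      ∀ x y : ℝ, |f t x - f t y| ≤ K t * |x - y|)
    (hND : Nonresonant a lam DirichletBC)
    (GD : ℝ → ℝ → ℝ) (hGD : IsGreenFunction a lam DirichletBC GD)
    (PD : ℝ)
    (hPD : IsGreatest ((fun t => ∫ s in (0:ℝ)..1, |GD t s| * K s) '' unitI) PD)
    (hPDlt : PD < 1) :
    ∃ u u' : ℝ → ℝ, ContinuousOn u unitI ∧
      (∀ t ∈ unitI, u t = ∫ s in (0:ℝ)..1, GD t s * f s (u s)) ∧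
      IsW21Solution a lam (fun t => f t (u t)) u u' ∧
      u 0 = 0 ∧ u 1 = 0 := by
  classical
  haveI : CompactSpace unitI := isCompact_iff_compactSpace.mp isCompact_Icc
  haveI : Nonempty (C(unitI, ℝ)) := ⟨⟨fun _ => 0, continuous_const⟩⟩
  -- extension of a continuous map on unitI to ℝ
  set ext : C(unitI, ℝ) → ℝ → ℝ :=
    fun v t => v (Set.projIcc (0:ℝ) 1 zero_le_one t) with hext
  have hextmem : ∀ (v : C(unitI, ℝ)) (t : ℝ) (ht : t ∈ unitI), ext v t = v ⟨t, ht⟩ := by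
    intro v t ht
    rw [hext]
    exact congrArg v (Set.projIcc_of_mem zero_le_one ht)
  have hextcont : ∀ v : C(unitI, ℝ), Continuous (ext v) :=
    fun v => v.continuous.comp continuous_projIcc
  have hextbd : ∀ (v : C(unitI, ℝ)) (t : ℝ), |ext v t| ≤ ‖v‖ :=
    fun v t => v.norm_coe_le_norm _
  -- the nonlinearity composed with the extension is integrable
  have hσ : ∀ v : C(unitI, ℝ), IntervalIntegrable (fun s => f s (ext v s)) volume 0 1 :=
    fun v => aux_int f hmeas hcont hbound K hKint hKnonneg hLip (ext v)
      (hextcont v).measurable ‖v‖ (hextbd v)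
  have hIcc : Set.uIcc (0:ℝ) 1 = unitI := uIcc_of_le zero_le_one
  -- continuity of the Green operator output
  have hGt : ∀ t ∈ unitI, ContinuousOn (fun s => GD t s) unitI := by
    intro t ht
    exact hGD.1.comp (continuous_const.prodMk continuous_id).continuousOn
      (fun s hs => ⟨ht, hs⟩)
  have hcontint : ∀ v : C(unitI, ℝ),
      ContinuousOn (fun t => ∫ s in (0:ℝ)..1, GD t s * f s (ext v s)) unitI := by
    intro v
    obtain ⟨w', hsol, _⟩ := hGD.2 _ (hσ v)
    intro t ht
    exact (hsol.1 t ht).continuousWithinAt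
  -- the operator T
  set T : C(unitI, ℝ) → C(unitI, ℝ) :=
    fun v => ⟨fun x => ∫ s in (0:ℝ)..1, GD x s * f s (ext v s),
      ContinuousOn.restrict (hcontint v)⟩ with hT
  have hPD0 : 0 ≤ PD := by
    obtain ⟨t, ht, hteq⟩ := hPD.1
    rw [← hteq]
    exact intervalIntegral.integral_nonneg zero_le_one
      (fun s _ => mul_nonneg (abs_nonneg _) (hKnonneg s))
  -- contraction estimate
  have key : ∀ u v : C(unitI, ℝ), ∀ x : unitI,
      |T u x - T v x| ≤ PD * dist u v := by
    intro u v x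
    set d := dist u v with hd
    have hGc : ContinuousOn (fun s => GD (↑x) s) (Set.uIcc (0:ℝ) 1) := by
      rw [hIcc]; exact hGt (↑x) x.2
    have hint1 : IntervalIntegrable (fun s => GD (↑x) s * f s (ext u s)) volume 0 1 :=
      (hσ u).continuousOn_mul hGc
    have hint2 : IntervalIntegrable (fun s => GD (↑x) s * f s (ext v s)) volume 0 1 :=
      (hσ v).continuousOn_mul hGc
    have hB : IntervalIntegrable (fun s => |GD (↑x) s| * (K s * d)) volume 0 1 :=
      (hKint.mul_const d).continuousOn_mul hGc.abs
    have hsub2 : Set.uIoc (0:ℝ) 1 ⊆ unitI := by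
      rw [Set.uIoc_of_le zero_le_one]; exact Ioc_subset_Icc_self
    have hae : ∀ᵐ s ∂(volume.restrict (Set.uIoc (0:ℝ) 1)),
        ‖GD (↑x) s * f s (ext u s) - GD (↑x) s * f s (ext v s)‖
          ≤ |GD (↑x) s| * (K s * d) := by
      filter_upwards [ae_restrict_of_ae_restrict_of_subset hsub2 hLip] with s h1
      rw [← mul_sub, Real.norm_eq_abs, abs_mul]
      refine mul_le_mul_of_nonneg_left ?_ (abs_nonneg _)
      refine (h1 _ _).trans (mul_le_mul_of_nonneg_left ?_ (hKnonneg s))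
      calc |ext u s - ext v s|
          = dist (u (Set.projIcc (0:ℝ) 1 zero_le_one s))
              (v (Set.projIcc (0:ℝ) 1 zero_le_one s)) := by rw [Real.dist_eq]
        _ ≤ d := ContinuousMap.dist_apply_le_dist _
    have hTsub : T u x - T v x
        = ∫ s in (0:ℝ)..1,
            (GD (↑x) s * f s (ext u s) - GD (↑x) s * f s (ext v s)) :=
      (intervalIntegral.integral_sub hint1 hint2).symm
    rw [hTsub, ← Real.norm_eq_abs]
    refine (intervalIntegral.norm_integral_le_abs_of_norm_le hae hB).trans ?_
    have hBnn : |∫ s in (0:ℝ)..1, |GD (↑x) s| * (K s * d)|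
        = ∫ s in (0:ℝ)..1, |GD (↑x) s| * (K s * d) :=
      abs_of_nonneg (intervalIntegral.integral_nonneg zero_le_one
        (fun s _ => mul_nonneg (abs_nonneg _) (mul_nonneg (hKnonneg s) dist_nonneg)))
    rw [hBnn]
    have : (∫ s in (0:ℝ)..1, |GD (↑x) s| * (K s * d))
        = (∫ s in (0:ℝ)..1, |GD (↑x) s| * K s) * d := by
      rw [← intervalIntegral.integral_mul_const]
      congr 1; ext s; ring
    rw [this]
    exact mul_le_mul_of_nonneg_right (hPD.2 ⟨↑x, x.2, rfl⟩) dist_nonneg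
  -- T is a contraction
  set Kc : NNReal := ⟨PD, hPD0⟩ with hKc
  have hLipT : LipschitzWith Kc T := by
    apply LipschitzWith.of_dist_le_mul
    intro u v
    show dist (T u) (T v) ≤ PD * dist u v
    rw [ContinuousMap.dist_le (mul_nonneg hPD0 dist_nonneg)]
    intro x
    rw [Real.dist_eq]
    exact key u v x
  have hCW : ContractingWith Kc T := ⟨by exact_mod_cast hPDlt, hLipT⟩
  set v : C(unitI, ℝ) := ContractingWith.fixedPoint T hCW with hv
  have hfix : T v = v := hCW.fixedPoint_isFixedPt
  -- the solution
  obtain ⟨w', hsol, hBC⟩ := hGD.2 _ (hσ v)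
  set u : ℝ → ℝ := fun t => ∫ s in (0:ℝ)..1, GD t s * f s (ext v s) with hu
  have hagree : ∀ t (ht : t ∈ unitI), u t = ext v t := by
    intro t ht
    rw [hextmem v t ht]
    exact DFunLike.congr_fun hfix ⟨t, ht⟩
  refine ⟨u, w', ?_, ?_, ?_, hBC.1, hBC.2⟩
  · intro t ht
    exact (hsol.1 t ht).continuousWithinAt
  · intro t ht
    have heq : Set.EqOn (fun s => GD t s * f s (u s))
        (fun s => GD t s * f s (ext v s)) (Set.uIcc (0:ℝ) 1) := by
      intro s hs
      rw [hIcc] at hs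
      simp only
      rw [hagree s hs]
    exact (intervalIntegral.integral_congr heq).symm
  · obtain ⟨u'', h1, h2, h3⟩ := hsol.2
    refine ⟨hsol.1, u'', h1, h2, ?_⟩
    filter_upwards [h3, ae_restrict_mem (show MeasurableSet unitI from measurableSet_Icc)]
      with t h3t ht
    calc u'' t + (a t + lam) * u t = f t (ext v t) := h3t
      _ = f t (u t) := (congrArg (f t) (hagree t ht)).symm
end
end
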